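/- arXiv:1006.4120 — 14 statements merged into one kernel-verified Lean document; each statement's English description precedes it below -/
import Mathlib

section
/- Let A be a unital associative ℂ-algebra and let b⁺, b⁻, f⁺, f⁻ ∈ A satisfy the defining trilinear relations of P_BF^(1,1). Set R⁺ = (1/2)(b⁺f⁺ + f⁺b⁺). Then (R⁺)² = 0. -/
noncomputable section

/-- The commutator `[x, y] = x*y - y*x`. -/
def pbComm {A : Type*} [Ring A] (x y : A) : A := x * y - y * x

/-- The anticommutator `{x, y} = x*y + y*x`. -/
def pbAcomm {A : Type*} [Ring A] (x y : A) : A := x * y + y * x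

/-- The defining trilinear relations of the Relative Parabose Set algebra
`P_BF^(1,1)` on generators `bp = b⁺`, `bm = b⁻`, `fp = f⁺`, `fm = f⁻`. -/
def PBFRels {A : Type*} [Ring A] (bp bm fp fm : A) : Prop :=
  pbComm (pbAcomm bp bp) fm = 0 ∧
  pbComm (pbComm fp fm) bm = 0 ∧
  pbComm (pbAcomm bp bp) fp = 0 ∧
  pbComm (pbAcomm bm bm) fp = 0 ∧
  pbComm (pbAcomm bm bm) fm = 0 ∧
  pbComm (pbAcomm bp bm) fm = 0 ∧
  pbComm (pbAcomm fm bm) bm = 0 ∧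
  pbComm (pbAcomm fm bp) bp = 0 ∧
  pbComm (pbAcomm fm bp) bm = -(2 * fm) ∧
  pbAcomm (pbAcomm bm fp) fm = 2 * bm ∧
  pbComm (pbAcomm fp bp) bp = 0 ∧
  pbComm (pbAcomm fp bm) bm = 0 ∧
  pbComm (pbAcomm bm fm) bp = 2 * fm ∧
  pbAcomm (pbAcomm fm bm) fp = 2 * bm ∧
  pbAcomm (pbAcomm bm fm) fm = 0 ∧
  pbAcomm (pbAcomm bm fp) fp = 0 ∧
  pbComm (pbAcomm bm bp) fp = 0 ∧
  pbComm (pbComm fm fp) bp = 0 ∧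
  pbAcomm (pbAcomm bp fp) fp = 0 ∧
  pbAcomm (pbAcomm bp fm) fm = 0 ∧
  pbComm (pbAcomm fp bm) bp = 2 * fp ∧
  pbComm (pbAcomm bp fp) bm = -(2 * fp) ∧
  pbAcomm (pbAcomm bp fm) fp = 2 * bp ∧
  pbAcomm (pbAcomm fp bp) fm = 2 * bp ∧
  pbComm bm (pbAcomm bp bm) = 2 * bm ∧
  pbComm bp (pbAcomm bp bp) = 0 ∧
  pbComm bp (pbAcomm bm bm) = -(4 * bm) ∧
  pbComm fm (pbComm fp fm) = 2 * fm ∧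
  pbComm bm (pbAcomm bm bm) = 0 ∧
  pbComm bm (pbAcomm bp bp) = 4 * bp ∧
  pbComm bp (pbAcomm bm bp) = -(2 * bp) ∧
  pbComm fp (pbComm fm fp) = 2 * fp

theorem rplus_sq_eq_zero {A : Type*} [Ring A] [Algebra ℂ A]
    (bp bm fp fm : A) (hrel : PBFRels bp bm fp fm) :
    ((2 : ℂ)⁻¹ • (bp * fp + fp * bp)) ^ 2 = 0 := by
  obtain ⟨-,-,-,-,-,-,-,-,-,-,h11,-,-,-,-,-,-,-,h19,-⟩ := hrel
  simp only [pbComm, pbAcomm] at h11 h19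
  set x := bp * fp + fp * bp with hx
  have hb : x * bp = bp * x := by
    rw [hx, show (bp*fp+fp*bp)*bp = (fp*bp+bp*fp)*bp - bp*(fp*bp+bp*fp) + bp*(bp*fp+fp*bp)
      from by noncomm_ring, h11]; noncomm_ring
  have hf : x * fp = -(fp * x) := by
    refine eq_neg_of_add_eq_zero_left ?_
    rw [hx, show (bp*fp+fp*bp)*fp + fp*(bp*fp+fp*bp) = (bp*fp+fp*bp)*fp + fp*(bp*fp+fp*bp)
      from rfl, h19]
  have e1 : x * x = -(x * x) := by
    calc x * x = (x*bp)*fp + (x*fp)*bp := by rw [hx]; noncomm_ring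
      _ = (bp*x)*fp + (-(fp*x))*bp := by rw [hb, hf]
      _ = bp*(x*fp) - fp*(x*bp) := by noncomm_ring
      _ = bp*(-(fp*x)) - fp*(bp*x) := by rw [hb, hf]
      _ = -((bp*fp+fp*bp)*x) := by noncomm_ring
      _ = -(x*x) := by rw [← hx]
  have h2 : (2:ℂ) • (x*x) = 0 := by
    rw [two_smul]; nth_rewrite 1 [e1]; exact neg_add_cancel _
  have hxx : x * x = 0 := by
    have := congrArg (fun y => (2:ℂ)⁻¹ • y) h2
    simpa [inv_smul_smul₀ (two_ne_zero (α := ℂ))] using this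
  rw [smul_pow, sq x, hxx, smul_zero]
end
end

section
/- Let A be a unital associative ℂ-algebra and let b⁺, b⁻, f⁺, f⁻ ∈ A satisfy the defining trilinear relations of P_BF^(1,1). Then for every integer k ≥ 1: b⁻(f⁺)ᵏ = (-1)^(k+1)(k-1)(f⁺)ᵏb⁻ + (-1)^(k+1)k(f⁺)^(k-1)b⁻f⁺. -/
noncomputable section

theorem bm_fp_pow {A : Type*} [Ring A] [Algebra ℂ A]
    (bp bm fp fm : A) (hrel : PBFRels bp bm fp fm)
    (k : ℕ) (hk : 1 ≤ k) :
    bm * fp ^ k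
      = ((-1 : ℂ) ^ (k + 1) * ((k : ℂ) - 1)) • (fp ^ k * bm)
        + ((-1 : ℂ) ^ (k + 1) * (k : ℂ)) • (fp ^ (k - 1) * bm * fp) := by
  obtain ⟨-, -, -, -, -, -, -, -, -, -, -, -, -, -, -, h16, -⟩ := hrel
  have hq : bm * fp * fp = -(fp * fp * bm) - fp * (bm * fp) - fp * (bm * fp) := by
    simp only [pbAcomm] at h16
    rw [← sub_eq_zero,
      show bm * fp * fp - (-(fp * fp * bm) - fp * (bm * fp) - fp * (bm * fp))
        = (bm * fp + fp * bm) * fp + fp * (bm * fp + fp * bm) from by noncomm_ring, h16]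
  induction k, hk using Nat.le_induction with
  | base =>
    simp
  | succ k hk ih =>
    have hfp : fp ^ (k - 1) * fp = fp ^ k := by
      rw [← pow_succ]; congr 1; omega
    have h2 : fp ^ (k + 1) = fp ^ (k - 1) * fp * fp := by rw [hfp, ← pow_succ]
    rw [show bm * fp ^ (k + 1) = bm * fp ^ k * fp from by rw [pow_succ, mul_assoc], ih,
      add_mul, smul_mul_assoc, smul_mul_assoc,
      show fp ^ (k - 1) * bm * fp * fp = fp ^ (k - 1) * (bm * fp * fp) from by
        simp [mul_assoc], hq,
      show fp ^ (k - 1) * (-(fp * fp * bm) - fp * (bm * fp) - fp * (bm * fp))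
          = -(fp ^ (k + 1) * bm) - fp ^ k * bm * fp - fp ^ k * bm * fp from by
        rw [h2, ← hfp]; noncomm_ring,
      show (k + 1) - 1 = k from by omega]
    push_cast
    match_scalars <;> ring
end
end

section
/- Let A be a unital associative ℂ-algebra and let b⁺, b⁻, f⁺, f⁻ ∈ A satisfy the defining trilinear relations of P_BF^(1,1). Then for every integer m ≥ 1: if m is even, b⁻(b⁺)ᵐ = (b⁺)ᵐb⁻ + m(b⁺)^(m-1), and if m is odd, b⁻(b⁺)ᵐ = (b⁺)^(m-1)b⁻b⁺ + (m-1)(b⁺)^(m-1). -/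
noncomputable section

theorem bm_bp_pow {A : Type*} [Ring A] [Algebra ℂ A]
    (bp bm fp fm : A) (hrel : PBFRels bp bm fp fm)
    (m : ℕ) (hm : 1 ≤ m) :
    (Even m → bm * bp ^ m = bp ^ m * bm + (m : ℂ) • bp ^ (m - 1)) ∧
    (Odd m → bm * bp ^ m
      = bp ^ (m - 1) * bm * bp + ((m : ℂ) - 1) • bp ^ (m - 1)) := by
  have h := hrel.2.2.2.2.2.2.2.2.2.2.2.2.2.2.2.2.2.2.2.2.2.2.2.2.2.2.2.2.2.1
  simp only [pbComm, pbAcomm] at h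
  have key : bm * (bp * bp) = bp * bp * bm + 2 • bp := by
    have h2 : (2 : ℂ) • (bm * (bp * bp)) = (2 : ℂ) • (bp * bp * bm + 2 • bp) := by
      rw [two_smul, two_smul, two_smul]
      linear_combination (norm := noncomm_ring) h
    exact smul_right_injective A two_ne_zero h2
  have step2 : ∀ n : ℕ, bm * bp ^ (n + 2)
      = bp * (bp * (bm * bp ^ n)) + 2 • (bp * bp ^ n) := by
    intro n
    have e : n + 2 = 2 + n := by ring
    rw [e, pow_add, pow_two, ← mul_assoc, key]
    simp only [add_mul, smul_mul_assoc, mul_assoc]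
  have hO : ∀ k : ℕ, bm * bp ^ (2 * k + 1)
      = bp ^ (2 * k) * (bm * bp) + (2 * k) • bp ^ (2 * k) := by
    intro k
    induction k with
    | zero => simp
    | succ k ih =>
      have e : 2 * (k + 1) + 1 = (2 * k + 1) + 2 := by ring
      rw [e, step2, ih]
      rw [show 2 * (k + 1) = 2 + 2 * k from by ring, pow_add bp 2 (2 * k), pow_two]
      simp only [pow_succ', mul_add, mul_smul_comm, mul_assoc, add_nsmul]
      abel
  have hE : ∀ k : ℕ, bm * bp ^ (2 * k + 2)
      = bp ^ (2 * k + 2) * bm + (2 * k + 2) • bp ^ (2 * k + 1) := by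
    intro k
    induction k with
    | zero => simpa [pow_succ', mul_assoc] using key
    | succ k ih =>
      have e : 2 * (k + 1) + 2 = (2 * k + 2) + 2 := by ring
      rw [e, step2, ih]
      rw [show 2 * k + 2 + 2 = 2 + (2 * k + 2) from by ring,
        show 2 * (k + 1) + 1 = 2 + (2 * k + 1) from by ring,
        pow_add bp 2 (2 * k + 2), pow_add bp 2 (2 * k + 1), pow_two]
      simp only [pow_succ', mul_add, mul_smul_comm, mul_assoc, add_nsmul]
      abel
  constructor
  · intro he
    obtain ⟨k, hk⟩ := he
    obtain ⟨j, rfl⟩ : ∃ j, m = 2 * j + 2 := ⟨k - 1, by omega⟩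
    rw [hE j, show 2 * j + 2 - 1 = 2 * j + 1 from rfl,
      show ((2 * j + 2 : ℕ) : ℂ) • bp ^ (2 * j + 1) = (2 * j + 2) • bp ^ (2 * j + 1) from
        Nat.cast_smul_eq_nsmul ℂ _ _]
  · intro ho
    obtain ⟨j, rfl⟩ := ho
    rw [hO j, Nat.add_sub_cancel, mul_assoc,
      show (((2 * j + 1 : ℕ) : ℂ) - 1) • bp ^ (2 * j) = (2 * j) • bp ^ (2 * j) from by
        rw [show (((2 * j + 1 : ℕ) : ℂ) - 1) = ((2 * j : ℕ) : ℂ) from by push_cast; ring,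
          Nat.cast_smul_eq_nsmul]]
end
end

section
/- Let A be a unital associative ℂ-algebra and let b⁺, b⁻, f⁺, f⁻ ∈ A satisfy the defining trilinear relations of P_BF^(1,1). Then for every integer n ≥ 1: if n is even, f⁺(b⁺)ⁿ = (b⁺)ⁿf⁺, and if n is odd, f⁺(b⁺)ⁿ = (b⁺)^(n-1)f⁺b⁺. -/
noncomputable section

theorem fp_bp_pow {A : Type*} [Ring A] [Algebra ℂ A]
    (bp bm fp fm : A) (hrel : PBFRels bp bm fp fm)
    (n : ℕ) (hn : 1 ≤ n) :
    (Even n → fp * bp ^ n = bp ^ n * fp) ∧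
    (Odd n → fp * bp ^ n = bp ^ (n - 1) * fp * bp) := by
  obtain ⟨-, -, h, -⟩ := hrel
  unfold pbComm pbAcomm at h
  have hx : (2 : ℂ) • (fp * (bp * bp) - bp * bp * fp) = 0 := by
    rw [two_smul]
    calc (fp * (bp * bp) - bp * bp * fp) + (fp * (bp * bp) - bp * bp * fp)
        = -((bp * bp + bp * bp) * fp - fp * (bp * bp + bp * bp)) := by noncomm_ring
      _ = 0 := by rw [h, neg_zero]
  have hc : Commute fp (bp * bp) := by
    have h0 : fp * (bp * bp) - bp * bp * fp = 0 :=
      (smul_eq_zero.mp hx).resolve_left (by norm_num)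
    exact sub_eq_zero.mp h0
  have heven : ∀ k : ℕ, fp * bp ^ (2 * k) = bp ^ (2 * k) * fp := by
    intro k
    have : bp ^ (2 * k) = (bp * bp) ^ k := by
      rw [pow_mul, sq]
    rw [this]
    exact (hc.pow_right k).eq
  constructor
  · rintro ⟨k, hk⟩
    have : n = 2 * k := by omega
    subst this; exact heven k
  · rintro ⟨k, hk⟩
    have hn1 : n - 1 = 2 * k := by omega
    have : bp ^ n = bp ^ (n - 1) * bp := by
      rw [← pow_succ]; congr 1; omega
    rw [this, ← mul_assoc, hn1, heven k]
end
end

section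
/- Let A be a unital associative ℂ-algebra and let b⁺, b⁻, f⁺, f⁻ ∈ A satisfy the defining trilinear relations of P_BF^(1,1). Set R⁺ = (1/2)(b⁺f⁺ + f⁺b⁺). Then for every integer k ≥ 1: b⁺(f⁺)ᵏ = (-f⁺)ᵏb⁺ + 2kR⁺(f⁺)^(k-1). -/
noncomputable section

theorem bp_fp_pow {A : Type*} [Ring A] [Algebra ℂ A]
    (bp bm fp fm : A) (hrel : PBFRels bp bm fp fm)
    (k : ℕ) (hk : 1 ≤ k) :
    bp * fp ^ k
      = (-fp) ^ k * bp
        + ((2 : ℂ) * (k : ℂ)) • (((2 : ℂ)⁻¹ • (bp * fp + fp * bp)) * fp ^ (k - 1)) := by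
  -- the relation {{b⁺,f⁺},f⁺} = 0
  have h19 := hrel.2.2.2.2.2.2.2.2.2.2.2.2.2.2.2.2.2.2.1
  unfold pbAcomm at h19
  set R : A := bp * fp + fp * bp with hRdef
  have hR : R * fp = -(fp * R) := by
    rw [eq_neg_iff_add_eq_zero]; exact h19
  -- R * fp^n = (-fp)^n * R
  have hpow : ∀ n : ℕ, R * fp ^ n = (-fp) ^ n * R := by
    intro n
    induction n with
    | zero => simp
    | succ n ih =>
      rw [pow_succ, ← mul_assoc, ih, mul_assoc, hR, pow_succ]
      noncomm_ring
  obtain ⟨m, rfl⟩ : ∃ m, k = m + 1 := ⟨k - 1, (Nat.succ_pred_eq_of_pos hk).symm⟩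
  clear hk
  simp only [Nat.add_sub_cancel]
  -- simplify the scalar: (2 * c) • (2⁻¹ • R * x) = c • (R * x)
  have hsmul : ∀ (c : ℂ) (x : A),
      ((2 : ℂ) * c) • (((2 : ℂ)⁻¹ • R) * x) = c • (R * x) := by
    intro c x
    rw [smul_mul_assoc, smul_smul]
    congr 1
    ring
  rw [hsmul]
  induction m with
  | zero =>
    rw [pow_one, pow_one, pow_zero, mul_one, hRdef]
    have : ((0 + 1 : ℕ) : ℂ) = 1 := by norm_num
    rw [this, one_smul]
    noncomm_ring
  | succ m ih =>
    have step : bp * fp ^ (m + 1 + 1) = (bp * fp ^ (m + 1)) * fp := by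
      rw [mul_assoc, ← pow_succ]
    rw [step, ih, add_mul, mul_assoc, smul_mul_assoc, mul_assoc, ← pow_succ]
    have hbf : bp * fp = R - fp * bp := by rw [hRdef]; noncomm_ring
    rw [hbf]
    have hRc : (-fp) ^ (m + 1) * R = R * fp ^ (m + 1) := (hpow (m + 1)).symm
    rw [mul_sub, hRc]
    have hneg : (-fp) ^ (m + 1) * (fp * bp) = -((-fp) ^ (m + 1 + 1) * bp) := by
      rw [pow_succ (-fp) (m + 1)]
      noncomm_ring
    rw [hneg]
    have hc : ((m + 1 + 1 : ℕ) : ℂ) = ((m + 1 : ℕ) : ℂ) + 1 := by push_cast; ring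
    rw [hc]
    module
end
end

section
/- Let A be a unital associative ℂ-algebra and let b⁺, b⁻, f⁺, f⁻ ∈ A satisfy the defining trilinear relations of P_BF^(1,1). Then for every integer m ≥ 1: f⁻(f⁺)ᵐ = -(m-1)(f⁺)ᵐf⁻ + m(f⁺)^(m-1)f⁻f⁺ - m(m-1)(f⁺)^(m-1). -/
noncomputable section

theorem fm_fp_pow {A : Type*} [Ring A] [Algebra ℂ A]
    (bp bm fp fm : A) (hrel : PBFRels bp bm fp fm)
    (m : ℕ) (hm : 1 ≤ m) :
    fm * fp ^ m
      = (-((m : ℂ) - 1)) • (fp ^ m * fm)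
        + (m : ℂ) • (fp ^ (m - 1) * fm * fp)
        - ((m : ℂ) * ((m : ℂ) - 1)) • fp ^ (m - 1) := by

  obtain ⟨k, rfl⟩ : ∃ k, m = k + 1 := ⟨m - 1, (Nat.succ_pred_eq_of_pos hm).symm⟩
  clear hm
  -- extract the key fermionic relation
  have h32 := hrel.2.2.2.2.2.2.2.2.2.2.2.2.2.2.2.2.2.2.2.2.2.2.2.2.2.2.2.2.2.2.2
  simp only [pbComm] at h32
  have key : fm * fp * fp = 2 * (fp * (fm * fp)) - fp * (fp * fm) - 2 * fp := by
    linear_combination (norm := noncomm_ring) -h32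
  induction k with
  | zero => simp
  | succ j ih =>
    have h2 : fp ^ j * fm * fp * fp
        = 2 * (fp ^ (j + 1) * fm * fp) - fp ^ (j + 2) * fm - 2 * fp ^ (j + 1) := by
      have h := congrArg (fp ^ j * ·) key
      simp only [mul_sub, ← mul_assoc, ← pow_succ] at h
      linear_combination (norm := noncomm_ring) h
    have e1 : fm * fp ^ (j + 2) = (fm * fp ^ (j + 1)) * fp := by
      rw [pow_succ, ← mul_assoc]
    rw [ih] at e1
    simp only [add_mul, sub_mul, smul_mul_assoc, mul_assoc] at e1
    simp only [← mul_assoc, ← pow_succ, Nat.add_sub_cancel] at e1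
    rw [h2] at e1
    have hj2 : j + 1 + 1 = j + 2 := rfl
    simp only [hj2, Nat.add_sub_cancel] at e1 ⊢
    rw [e1]
    push_cast
    simp only [two_mul, smul_sub, smul_add]
    module
end
end

section
/- Let A be a unital associative ℂ-algebra and let b⁺, b⁻, f⁺, f⁻ ∈ A satisfy the defining trilinear relations of P_BF^(1,1). Then for every integer n ≥ 1: if n is even, f⁻(b⁺)ⁿ = (b⁺)ⁿf⁻, and if n is odd, f⁻(b⁺)ⁿ = (b⁺)^(n-1)f⁻b⁺. -/
noncomputable section

theorem fm_bp_pow {A : Type*} [Ring A] [Algebra ℂ A]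
    (bp bm fp fm : A) (hrel : PBFRels bp bm fp fm)
    (n : ℕ) (hn : 1 ≤ n) :
    (Even n → fm * bp ^ n = bp ^ n * fm) ∧
    (Odd n → fm * bp ^ n = bp ^ (n - 1) * fm * bp) := by
  have h1 := hrel.1
  simp only [pbComm, pbAcomm] at h1
  have key : fm * (bp * bp) = bp * bp * fm := by
    have h2 : (2:ℂ) • (bp*bp*fm - fm*(bp*bp)) = 0 := by
      rw [two_smul]
      have heq : bp*bp*fm - fm*(bp*bp) + (bp*bp*fm - fm*(bp*bp))
          = (bp*bp + bp*bp) * fm - fm * (bp*bp + bp*bp) := by noncomm_ring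
      rw [heq, h1]
    have h3 := congrArg (fun x => (2⁻¹:ℂ) • x) h2
    simp only [smul_smul, smul_zero] at h3
    norm_num at h3
    exact (sub_eq_zero.mp h3).symm
  induction n, hn using Nat.le_induction with
  | base =>
    constructor
    · intro h; simp at h
    · intro _; simp
  | succ n hn ih =>
    have ihe := ih.1
    have iho := ih.2
    constructor
    · intro he
      have ho : Odd n := by
        rcases Nat.even_or_odd n with h | h
        · exact absurd (Even.add_one h) (Nat.not_odd_iff_even.mpr he)
        · exact h
      have hrw : fm * bp ^ n = bp ^ (n-1) * fm * bp := iho ho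
      have hpow : bp ^ (n+1) = bp ^ (n-1) * (bp * bp) := by
        rw [← mul_assoc, ← pow_succ, ← pow_succ]
        congr 1
        omega
      rw [pow_succ, ← mul_assoc, hrw, mul_assoc, mul_assoc, key, ← mul_assoc, ← mul_assoc,
        ← pow_succ, ← pow_succ]
      have hexp : n - 1 + 1 + 1 = n + 1 := by omega
      rw [hexp, pow_succ]
    · intro ho
      have he : Even n := by
        rcases Nat.even_or_odd n with h | h
        · exact h
        · exact absurd (Odd.add_one h) (Nat.not_even_iff_odd.mpr ho).elim
      have hrw : fm * bp ^ n = bp ^ n * fm := ihe he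
      simp only [Nat.add_sub_cancel]
      rw [pow_succ, ← mul_assoc, hrw]
end
end

section
/- Under the Fock-vacuum assumptions, for all integers m ≥ 1 and 1 ≤ n ≤ p: if m is even then b⁻·|m,n,β⟩ = -(-1)ⁿ |m-1,n,α⟩ + (-1)ⁿ(2n - m - p) |m-1,n,β⟩, and if m is odd then b⁻·|m,n,β⟩ = -(-1)ⁿ |m-1,n,α⟩ - (-1)ⁿ(m-1) |m-1,n,β⟩. -/
noncomputable section

/-- `R⁺ = (1/2)(b⁺f⁺ + f⁺b⁺)` as a linear operator. -/
def Rplus {V : Type*} [AddCommGroup V] [Module ℂ V] (bp fp : Module.End ℂ V) :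
    Module.End ℂ V := (2 : ℂ)⁻¹ • (bp * fp + fp * bp)

/-- The vector `|m, n, α⟩ = (f⁺)ⁿ (b⁺)ᵐ |0⟩`. -/
def vA {V : Type*} [AddCommGroup V] [Module ℂ V] (bp fp : Module.End ℂ V)
    (vac : V) (m n : ℕ) : V := (fp ^ n * bp ^ m) vac

/-- The vector `|m, n, β⟩ = (f⁺)^(n-1) (b⁺)^(m-1) R⁺ |0⟩`, set to `0` when
`m = 0` or `n = 0`. -/
def vB {V : Type*} [AddCommGroup V] [Module ℂ V] (bp fp : Module.End ℂ V)
    (vac : V) (m n : ℕ) : V :=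
  if m = 0 ∨ n = 0 then 0 else (fp ^ (n - 1) * bp ^ (m - 1) * Rplus bp fp) vac

lemma pbf_pow_apply {V : Type*} [AddCommGroup V] [Module ℂ V]
    (g : Module.End ℂ V) (l : ℕ) (u : V) : (g^(l+1)) u = g ((g^l) u) := by
  rw [pow_succ', Module.End.mul_apply]

lemma pbf_pow_apply' {V : Type*} [AddCommGroup V] [Module ℂ V]
    (g : Module.End ℂ V) (l : ℕ) (u : V) : (g^(l+1)) u = (g^l) (g u) := by
  rw [pow_succ, Module.End.mul_apply]

theorem bm_action_beta {V : Type*} [AddCommGroup V] [Module ℂ V]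
    (p : ℕ) (hp : 0 < p)
    (bp bm fp fm : Module.End ℂ V) (hrel : PBFRels bp bm fp fm)
    (vac : V) (hb0 : bm vac = 0) (hf0 : fm vac = 0)
    (hbb : bm (bp vac) = (p : ℂ) • vac) (hff : fm (fp vac) = (p : ℂ) • vac)
    (hbf : bm (fp vac) = 0) (hfb : fm (bp vac) = 0)
    (m n : ℕ) (hm : 1 ≤ m) (hn1 : 1 ≤ n) (hn : n ≤ p) :
    (Even m → bm (vB bp fp vac m n)
      = (-((-1 : ℂ) ^ n)) • vA bp fp vac (m - 1) n
        + ((-1 : ℂ) ^ n * (2 * (n : ℂ) - (m : ℂ) - (p : ℂ))) • vB bp fp vac (m - 1) n) ∧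
    (Odd m → bm (vB bp fp vac m n)
      = (-((-1 : ℂ) ^ n)) • vA bp fp vac (m - 1) n
        - ((-1 : ℂ) ^ n * ((m : ℂ) - 1)) • vB bp fp vac (m - 1) n) := by
  obtain ⟨-, -, R3, -, -, -, -, -, -, -, -, -, -, -, -, R16, R17, -, R19, -, R21,
    -, -, -, -, -, -, -, -, R30, R31, -⟩ := hrel
  simp only [pbComm, pbAcomm] at R3 R16 R17 R19 R21 R30 R31
  -- normalize numerals on RHS
  have h4 : (4 : Module.End ℂ V) * bp = bp + bp + bp + bp := by
    rw [show (4 : Module.End ℂ V) = 2 + 2 by norm_num, add_mul, two_mul]; abel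
  rw [h4] at R30
  rw [two_mul] at R21 R31
  simp only [add_mul, mul_add, mul_assoc] at R3 R16 R17 R19 R21 R30 R31
  -- pointwise operator relations
  have pO1 : ∀ u : V, fp (bp (bp u)) = bp (bp (fp u)) := by
    intro u
    have h := LinearMap.congr_fun R3 u
    simp only [LinearMap.sub_apply, LinearMap.add_apply, Module.End.mul_apply,
      LinearMap.zero_apply] at h
    linear_combination (norm := module) (-(2⁻¹:ℂ)) • h
  have pO2 : ∀ u : V, bm (bp (bp u)) = bp (bp (bm u)) + (2:ℂ) • bp u := by
    intro u
    have h := LinearMap.congr_fun R30 u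
    simp only [LinearMap.sub_apply, LinearMap.add_apply, Module.End.mul_apply] at h
    linear_combination (norm := module) (2⁻¹:ℂ) • h
  have pO3 : ∀ u : V, bm (fp (bp u)) + fp (bm (bp u))
      = bp (bm (fp u)) + bp (fp (bm u)) + (2:ℂ) • fp u := by
    intro u
    have h := LinearMap.congr_fun R21 u
    simp only [LinearMap.sub_apply, LinearMap.add_apply, Module.End.mul_apply] at h
    linear_combination (norm := module) h
  have pO4 : ∀ u : V, bm (fp (fp u)) + fp (bm (fp u))
      = -(fp (bm (fp u)) + fp (fp (bm u))) := by
    intro u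
    have h := LinearMap.congr_fun R16 u
    simp only [LinearMap.add_apply, Module.End.mul_apply, LinearMap.zero_apply] at h
    linear_combination (norm := module) h
  have pO5 : ∀ u : V, bm (bp (fp u)) + bp (bm (fp u))
      = fp (bm (bp u)) + fp (bp (bm u)) := by
    intro u
    have h := LinearMap.congr_fun R17 u
    simp only [LinearMap.sub_apply, LinearMap.add_apply, Module.End.mul_apply,
      LinearMap.zero_apply] at h
    linear_combination (norm := module) h
  have pO6 : ∀ u : V, bm (bp (bp u)) + bp (bm (bp u))
      = bp (bm (bp u)) + bp (bp (bm u)) + (2:ℂ) • bp u := by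
    intro u
    have h := LinearMap.congr_fun R31 u
    simp only [LinearMap.sub_apply, LinearMap.add_apply, Module.End.mul_apply,
      LinearMap.neg_apply] at h
    linear_combination (norm := module) (-1:ℂ) • h
  have pO7 : ∀ u : V, bp (fp (fp u)) + fp (bp (fp u))
      = -(fp (bp (fp u)) + fp (fp (bp u))) := by
    intro u
    have h := LinearMap.congr_fun R19 u
    simp only [LinearMap.add_apply, Module.End.mul_apply, LinearMap.zero_apply] at h
    linear_combination (norm := module) h
  have pT : ∀ u : V, bp (fp (bp (fp u))) = fp (bp (fp (bp u))) := by
    intro u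
    have hi := pO7 (bp u)
    have hii := congrArg (⇑bp) (pO7 u)
    simp only [map_add, map_neg] at hii
    have hiii : fp (fp (bp (bp u))) = bp (bp (fp (fp u))) := by
      have h1 := congrArg (⇑fp) (pO1 u)
      rw [h1, pO1 (fp u)]
    linear_combination (norm := module) (2⁻¹:ℂ) • hii - (2⁻¹:ℂ) • hi + (2⁻¹:ℂ) • hiii
  -- the vector w = R⁺|0⟩ and vacuum facts
  set w : V := (Rplus bp fp) vac with hw
  have hww : w = (2⁻¹:ℂ) • (bp (fp vac) + fp (bp vac)) := by
    rw [hw]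
    simp only [Rplus, LinearMap.smul_apply, LinearMap.add_apply, Module.End.mul_apply]
  have hCvac : bp (fp vac) + fp (bp vac) = (2:ℂ) • w := by
    rw [hww]; module
  have v1 : bm (bp (fp vac)) = ((p:ℕ):ℂ) • fp vac := by
    have h := pO5 vac
    rw [hbf, hbb, hb0] at h
    simp only [map_zero, map_smul, add_zero] at h
    exact h
  have v2 : bm (fp (bp vac)) = (2:ℂ) • fp vac - ((p:ℕ):ℂ) • fp vac := by
    have h := pO3 vac
    rw [hbf, hbb, hb0] at h
    simp only [map_zero, map_smul, add_zero, zero_add] at h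
    linear_combination (norm := module) h
  have hbmw : bm w = fp vac := by
    rw [hww]
    simp only [map_smul, map_add]
    linear_combination (norm := module) (2⁻¹:ℂ) • v1 + (2⁻¹:ℂ) • v2
  have v3 : bm (fp (fp vac)) = 0 := by
    have h := pO4 vac
    rw [hbf, hb0] at h
    simp only [map_zero, add_zero] at h
    linear_combination (norm := module) h
  have v4 : bm (fp (fp (bp vac))) = ((p:ℕ):ℂ) • fp (fp vac) - (4:ℂ) • fp (fp vac) := by
    have h := pO4 (bp vac)
    rw [v2, hbb] at h
    simp only [map_sub, map_smul] at h
    linear_combination (norm := module) h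
  have v5 : bm (fp (bp (fp vac))) = (2:ℂ) • fp (fp vac) - ((p:ℕ):ℂ) • fp (fp vac) := by
    have h := pO3 (fp vac)
    rw [v1, v3, hbf] at h
    simp only [map_zero, map_smul, add_zero, zero_add] at h
    linear_combination (norm := module) h
  have hAw : bm (fp w) + fp (bm w) = 0 := by
    rw [hbmw, hww]
    simp only [map_smul, map_add]
    linear_combination (norm := module) (2⁻¹:ℂ) • v5 + (2⁻¹:ℂ) • v4
  have v6 : bm (bp (bp (fp vac))) = (2:ℂ) • bp (fp vac) := by
    have h := pO2 (fp vac)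
    rw [hbf] at h
    simp only [map_zero, zero_add] at h
    exact h
  have v7 : bm (bp (fp (bp vac))) = (2:ℂ) • fp (bp vac) + ((p:ℕ):ℂ) • fp (bp vac)
      - ((2:ℂ) • bp (fp vac) - ((p:ℕ):ℂ) • bp (fp vac)) := by
    have h := pO5 (bp vac)
    have h8 : bm (bp (bp vac)) = (2:ℂ) • bp vac := by
      have h9 := pO2 vac
      rw [hb0] at h9
      simp only [map_zero, zero_add] at h9
      exact h9
    rw [v2, h8, hbb] at h
    simp only [map_sub, map_smul] at h
    linear_combination (norm := module) h
  have hBw : bm (bp w) + bp (bm w) = (((p:ℕ):ℂ) + 2) • w := by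
    rw [hbmw, hww]
    simp only [map_smul, map_add]
    linear_combination (norm := module) (2⁻¹:ℂ) • v6 + (2⁻¹:ℂ) • v7
  have hCw : bp (fp w) + fp (bp w) = 0 := by
    rw [hww]
    simp only [map_smul, map_add]
    have c1 := pO7 (bp vac)
    have c2 := pT vac
    have c3 : fp (fp (bp (bp vac))) = fp (bp (bp (fp vac))) := congrArg (⇑fp) (pO1 vac)
    linear_combination (norm := module) (2⁻¹:ℂ) • c1 + (2⁻¹:ℂ) • c2 - (2⁻¹:ℂ) • c3
  -- power helpers
  have hfpc : ∀ (l:ℕ) (u:V), fp ((fp^l) u) = (fp^(l+1)) u :=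
    fun l u => (pbf_pow_apply fp l u).symm
  have hbpc : ∀ (l:ℕ) (u:V), bp ((bp^l) u) = (bp^(l+1)) u :=
    fun l u => (pbf_pow_apply bp l u).symm
  have hstep : ∀ (l:ℕ) (u:V), (bp^(2*(l+1))) u = bp (bp ((bp^(2*l)) u)) := by
    intro l u
    rw [show 2*(l+1) = (2*l+1)+1 by ring, pbf_pow_apply, pbf_pow_apply]
  have hsgn0 : ∀ k:ℕ, ((k:ℕ):ℂ) * (-1:ℂ)^(k-1) = -(((k:ℕ):ℂ) * (-1:ℂ)^k) := by
    intro k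
    cases k with
    | zero => simp
    | succ i => simp only [Nat.add_sub_cancel, pow_succ]; push_cast; ring
  have he2 : ∀ (k:ℕ) (u:V), ((k:ℕ):ℂ) • fp ((fp^(k-1)) u) = ((k:ℕ):ℂ) • ((fp^k) u) := by
    intro k u
    cases k with
    | zero => simp
    | succ i => simp only [Nat.add_sub_cancel]; rw [hfpc]
  have he4 : ∀ j:ℕ, (2*(j:ℂ)) • bp (bp ((bp^(2*j-1)) w)) = (2*(j:ℂ)) • ((bp^(2*j+1)) w) := by
    intro j
    cases j with
    | zero => simp
    | succ i => rw [hbpc, hbpc, show 2*(i+1)-1+1+1 = 2*(i+1)+1 by omega]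
  -- main induction lemmas
  have Q1 : ∀ (j:ℕ) (u:V), fp ((bp^(2*j)) u) = (bp^(2*j)) (fp u) := by
    intro j
    induction j with
    | zero => intro u; simp
    | succ j ih =>
      intro u
      rw [hstep j u, pO1, ih, hstep j (fp u)]
  have Q2 : ∀ (j:ℕ) (u:V), bp (fp ((bp^(2*j)) u)) + fp (bp ((bp^(2*j)) u))
      = (bp^(2*j)) (bp (fp u)) + (bp^(2*j)) (fp (bp u)) := by
    intro j u
    have hcomm : bp ((bp^(2*j)) u) = (bp^(2*j)) (bp u) := by
      rw [hbpc, pbf_pow_apply']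
    rw [Q1 j u, hcomm, Q1 j (bp u), hbpc, pbf_pow_apply']
  have QC : ∀ j:ℕ, bp (fp ((bp^(2*j)) w)) + fp (bp ((bp^(2*j)) w)) = 0 := by
    intro j
    have h := congrArg (⇑(bp^(2*j))) hCw
    simp only [map_add, map_zero] at h
    exact (Q2 j w).trans h
  have QCvac : ∀ j:ℕ, bp (fp ((bp^(2*j)) vac)) + fp (bp ((bp^(2*j)) vac))
      = (2:ℂ) • ((bp^(2*j)) w) := by
    intro j
    have h := congrArg (⇑(bp^(2*j))) hCvac
    simp only [map_add, map_smul] at h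
    exact (Q2 j vac).trans h
  have Q3 : ∀ j:ℕ, bm (bp ((bp^(2*j)) w)) + bp (bm ((bp^(2*j)) w))
      = (((p:ℕ):ℂ) + 2 + 4*(j:ℂ)) • ((bp^(2*j)) w) := by
    intro j
    induction j with
    | zero =>
      simp only [Nat.mul_zero, pow_zero, Module.End.one_apply, Nat.cast_zero]
      linear_combination (norm := module) hBw
    | succ j ih =>
      rw [hstep j w]
      have α := pO6 (bp ((bp^(2*j)) w))
      have β := congrArg (⇑bp) (pO6 ((bp^(2*j)) w))
      simp only [map_add, map_smul] at β
      have γ := congrArg (fun z => bp (bp z)) ih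
      simp only [map_add, map_smul] at γ
      push_cast
      linear_combination (norm := module) α + β + γ
  have Q5 : ∀ j:ℕ, bm ((bp^(2*j)) w)
      = (bp^(2*j)) (fp vac) + (2*(j:ℂ)) • ((bp^(2*j-1)) w) := by
    intro j
    induction j with
    | zero => simpa using hbmw
    | succ j ih =>
      rw [hstep j w, show 2*(j+1)-1 = 2*j+1 by omega, hstep j (fp vac)]
      have γ := congrArg (fun z => bp (bp z)) ih
      simp only [map_add, map_smul] at γ
      have α := pO2 ((bp^(2*j)) w)
      have e4 := he4 j
      have e5 : bp ((bp^(2*j)) w) = (bp^(2*j+1)) w := hbpc _ _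
      push_cast
      linear_combination (norm := module) α + γ + e4 + (2:ℂ) • e5
  have Q4 : ∀ j:ℕ, bm (fp ((bp^(2*j)) w)) + fp (bm ((bp^(2*j)) w)) = 0 := by
    intro j
    induction j with
    | zero => simpa using hAw
    | succ j ih =>
      rw [hstep j w]
      have α := pO3 (bp ((bp^(2*j)) w))
      have β := congrArg (⇑bp) (pO3 ((bp^(2*j)) w))
      simp only [map_add, map_smul] at β
      have γ := congrArg (fun z => bp (bp z)) ih
      simp only [map_add, map_zero] at γ
      have δ := QC j
      linear_combination (norm := module) α + β + γ + (2:ℂ) • δ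
  have Q6 : ∀ (k:ℕ) (x:V), bm (fp ((fp^k) x)) + fp (bm ((fp^k) x))
      = ((-1:ℂ)^k) • ((fp^k) (bm (fp x)) + (fp^k) (fp (bm x))) := by
    intro k
    induction k with
    | zero => intro x; simp
    | succ k ih =>
      intro x
      rw [pbf_pow_apply fp k x]
      have α := pO4 ((fp^k) x)
      have β := congrArg (⇑fp) (ih x)
      simp only [map_add, map_smul] at β
      have e1 : fp ((fp^k) (bm (fp x))) = (fp^(k+1)) (bm (fp x)) := hfpc _ _
      have e2 : fp ((fp^k) (fp (bm x))) = (fp^(k+1)) (fp (bm x)) := hfpc _ _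
      rw [pow_succ (-1:ℂ) k]
      linear_combination (norm := module) α - β - ((-1:ℂ)^k) • e1 - ((-1:ℂ)^k) • e2
  have Q8 : ∀ (k:ℕ) (x:V), bm ((fp^k) x) = ((-1:ℂ)^k) • (fp^k) (bm x)
      + (((k:ℕ):ℂ) * (-1:ℂ)^(k-1)) • ((fp^(k-1)) (bm (fp x) + fp (bm x))) := by
    intro k
    induction k with
    | zero => intro x; simp
    | succ k ih =>
      intro x
      rw [pbf_pow_apply fp k x]
      have α := Q6 k x
      have β := congrArg (⇑fp) (ih x)
      simp only [map_add, map_smul] at β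
      rw [hsgn0 k] at β
      have e1 : fp ((fp^k) (bm x)) = (fp^(k+1)) (bm x) := hfpc _ _
      have e21 := he2 k (bm (fp x))
      have e22 := he2 k (fp (bm x))
      simp only [Nat.add_sub_cancel, map_add]
      push_cast
      linear_combination (norm := module) α - β - ((-1:ℂ)^k) • e1
        + ((-1:ℂ)^k) • e21 + ((-1:ℂ)^k) • e22
  -- extra guards
  have he4b : ∀ j:ℕ, (2*(j:ℂ)) • bp ((bp^(2*j-1)) w) = (2*(j:ℂ)) • ((bp^(2*j)) w) := by
    intro j
    cases j with
    | zero => simp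
    | succ i => rw [hbpc, show 2*(i+1)-1+1 = 2*(i+1) by omega]
  have he3 : ∀ (k:ℕ) (u:V), ((k:ℕ):ℂ) • (fp^(k-1)) (fp u) = ((k:ℕ):ℂ) • ((fp^k) u) := by
    intro k u
    cases k with
    | zero => simp
    | succ i => simp only [Nat.add_sub_cancel]; rw [← pbf_pow_apply']
  refine ⟨fun hme => ?_, fun hmo => ?_⟩
  · -- even case
    obtain ⟨t, ht⟩ := hme
    obtain ⟨j, rfl⟩ : ∃ j, m = 2*j+2 := ⟨t-1, by omega⟩
    obtain ⟨k, rfl⟩ : ∃ k, n = k+1 := ⟨n-1, by omega⟩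
    have hvB : vB bp fp vac (2*j+2) (k+1) = (fp^k) (bp ((bp^(2*j)) w)) := by
      rw [vB, if_neg (by omega)]
      simp only [Nat.add_sub_cancel, show 2*j+2-1 = 2*j+1 by omega, Module.End.mul_apply]
      rw [← hw, pbf_pow_apply]
    have hvB' : vB bp fp vac (2*j+2-1) (k+1) = (fp^k) ((bp^(2*j)) w) := by
      rw [show 2*j+2-1 = 2*j+1 by omega, vB, if_neg (by omega)]
      simp only [Nat.add_sub_cancel, Module.End.mul_apply]
      try rw [← hw]
    have hvA : vA bp fp vac (2*j+2-1) (k+1) = (fp^(k+1)) ((bp^(2*j+1)) vac) := by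
      rw [show 2*j+2-1 = 2*j+1 by omega, vA]
      simp only [Module.End.mul_apply]
    rw [hvB, hvB', hvA]
    have e2 : bm (bp ((bp^(2*j)) w)) = (((p:ℕ):ℂ) + 2 + 4*(j:ℂ)) • ((bp^(2*j)) w)
        - bp (bm ((bp^(2*j)) w)) := by linear_combination (norm := module) Q3 j
    have e3 := congrArg (⇑bp) (Q5 j)
    simp only [map_add, map_smul] at e3
    rw [← Q1 j vac] at e3
    have E : bm (bp ((bp^(2*j)) w)) = (((p:ℕ):ℂ) + 2 + 2*(j:ℂ)) • ((bp^(2*j)) w)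
        - bp (fp ((bp^(2*j)) vac)) := by
      linear_combination (norm := module) e2 - e3 - he4b j
    have e5 : bp (fp ((bp^(2*j)) vac)) = (2:ℂ) • ((bp^(2*j)) w)
        - fp ((bp^(2*j+1)) vac) := by
      have hq := QCvac j
      rw [hbpc] at hq
      linear_combination (norm := module) hq
    have e7 : bm (fp (bp ((bp^(2*j)) w))) + fp (bm (bp ((bp^(2*j)) w)))
        = (2:ℂ) • fp ((bp^(2*j)) w) := by
      have α := pO3 ((bp^(2*j)) w)
      have β := congrArg (⇑bp) (Q4 j)
      simp only [map_add, map_zero] at β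
      linear_combination (norm := module) α + β
    rw [Q8 k (bp ((bp^(2*j)) w)), e7, E]
    simp only [map_sub, map_smul]
    rw [hsgn0 k]
    have e8 := congrArg (⇑(fp^k)) e5
    simp only [map_sub, map_smul] at e8
    rw [← pbf_pow_apply'] at e8
    rw [e8]
    push_cast
    linear_combination (norm := module) ((-2)*(-1:ℂ)^k) • he3 k ((bp^(2*j)) w)
  · -- odd case
    obtain ⟨j, rfl⟩ := hmo
    obtain ⟨k, rfl⟩ : ∃ k, n = k+1 := ⟨n-1, by omega⟩
    have hvB : vB bp fp vac (2*j+1) (k+1) = (fp^k) ((bp^(2*j)) w) := by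
      rw [vB, if_neg (by omega)]
      simp only [Nat.add_sub_cancel, Module.End.mul_apply]
      try rw [← hw]
    have hvA : vA bp fp vac (2*j+1-1) (k+1) = (fp^(k+1)) ((bp^(2*j)) vac) := by
      rw [show 2*j+1-1 = 2*j by omega, vA]
      simp only [Module.End.mul_apply]
    rw [hvB, hvA]
    rcases j with _ | i
    · have hvB0 : vB bp fp vac (2*0+1-1) (k+1) = 0 := by
        rw [vB, if_pos]; left; rfl
      rw [hvB0]
      simp only [Nat.mul_zero, pow_zero, Module.End.one_apply]
      rw [Q8 k w, hAw, hbmw]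
      simp only [map_zero, smul_zero, add_zero]
      rw [← pbf_pow_apply']
      push_cast
      module
    · have hvB' : vB bp fp vac (2*(i+1)+1-1) (k+1) = (fp^k) ((bp^(2*i+1)) w) := by
        rw [show 2*(i+1)+1-1 = 2*(i+1) by omega, vB, if_neg (by omega)]
        simp only [Nat.add_sub_cancel, show 2*(i+1)-1 = 2*i+1 by omega,
          Module.End.mul_apply]
        try rw [← hw]
      rw [hvB', Q8 k ((bp^(2*(i+1))) w), Q4 (i+1)]
      simp only [map_zero, smul_zero, add_zero]
      rw [Q5 (i+1), show 2*(i+1)-1 = 2*i+1 by omega, ← Q1 (i+1) vac]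
      simp only [map_add, map_smul]
      rw [← pbf_pow_apply']
      push_cast
      module
end
end

section
/- Under the Fock-vacuum assumptions, for all integers m ≥ 0 and 1 ≤ n ≤ p: f⁻·|m,n,α⟩ = n(p+1-n) |m,n-1,α⟩. -/
noncomputable section

theorem fm_action_alpha {V : Type*} [AddCommGroup V] [Module ℂ V]
    (p : ℕ) (hp : 0 < p)
    (bp bm fp fm : Module.End ℂ V) (hrel : PBFRels bp bm fp fm)
    (vac : V) (hb0 : bm vac = 0) (hf0 : fm vac = 0)
    (hbb : bm (bp vac) = (p : ℂ) • vac) (hff : fm (fp vac) = (p : ℂ) • vac)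
    (hbf : bm (fp vac) = 0) (hfb : fm (bp vac) = 0)
    (m n : ℕ) (hn1 : 1 ≤ n) (hn : n ≤ p) :
    fm (vA bp fp vac m n)
      = ((n : ℂ) * ((p : ℂ) + 1 - (n : ℂ))) • vA bp fp vac m (n - 1) := by
  obtain ⟨-, -, -, -, -, -, -, h8, -, -, -, -, -, -, -, -, -, h18, -, -, -, -, -, -,
    -, -, -, -, -, -, -, h32⟩ := hrel
  simp only [pbComm, pbAcomm] at h8 h18 h32
  set C := fm * bp + bp * fm with hCdef
  set X := fm * fp - fp * fm with hXdef
  have hCbp : C * bp = bp * C := sub_eq_zero.mp h8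
  have hXbp : X * bp = bp * X := sub_eq_zero.mp h18
  have hXfp : X * fp = fp * X - 2 * fp := by rw [← h32]; noncomm_ring
  have hCvac : C vac = 0 := by
    simp [hCdef, LinearMap.add_apply, Module.End.mul_apply, hf0, hfb]
  have hXvac : X vac = (p : ℂ) • vac := by
    simp [hXdef, LinearMap.sub_apply, Module.End.mul_apply, hf0, hff]
  have hComC : ∀ k : ℕ, C * bp ^ k = bp ^ k * C := fun k =>
    ((Commute.pow_right (hCbp : Commute C bp) k))
  have hComX : ∀ k : ℕ, X * bp ^ k = bp ^ k * X := fun k =>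
    ((Commute.pow_right (hXbp : Commute X bp) k))
  have hCbm : ∀ k : ℕ, C ((bp ^ k) vac) = 0 := by
    intro k
    rw [← Module.End.mul_apply, hComC k, Module.End.mul_apply, hCvac, map_zero]
  have hfmbm : ∀ k : ℕ, fm ((bp ^ k) vac) = 0 := by
    intro k
    induction k with
    | zero => simpa using hf0
    | succ k ih =>
      have h1 : (bp ^ (k + 1)) vac = bp ((bp ^ k) vac) := by
        rw [pow_succ', Module.End.mul_apply]
      have h2 : fm (bp ((bp ^ k) vac)) = C ((bp ^ k) vac) - bp (fm ((bp ^ k) vac)) := by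
        have hfb' : fm * bp = C - bp * fm := by rw [hCdef]; noncomm_ring
        calc fm (bp ((bp ^ k) vac)) = (fm * bp) ((bp ^ k) vac) := by
              rw [Module.End.mul_apply]
          _ = (C - bp * fm) ((bp ^ k) vac) := by rw [hfb']
          _ = C ((bp ^ k) vac) - bp (fm ((bp ^ k) vac)) := by
              rw [LinearMap.sub_apply, Module.End.mul_apply]
      rw [h1, h2, ih, hCbm, map_zero, sub_zero]
  set u := (bp ^ m) vac with hu
  have hXu : X u = (p : ℂ) • u := by
    rw [hu, ← Module.End.mul_apply, hComX m, Module.End.mul_apply, hXvac, map_smul]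
  have hXfpn : ∀ k : ℕ, X ((fp ^ k) u) = ((p : ℂ) - 2 * k) • (fp ^ k) u := by
    intro k
    induction k with
    | zero => simpa using hXu
    | succ k ih =>
      have h1 : (fp ^ (k + 1)) u = fp ((fp ^ k) u) := by
        rw [pow_succ', Module.End.mul_apply]
      have h2 : X (fp ((fp ^ k) u)) = fp (X ((fp ^ k) u)) - (2 : ℂ) • fp ((fp ^ k) u) := by
        calc X (fp ((fp ^ k) u)) = (X * fp) ((fp ^ k) u) := by rw [Module.End.mul_apply]
          _ = (fp * X - 2 * fp) ((fp ^ k) u) := by rw [hXfp]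
          _ = fp (X ((fp ^ k) u)) - (2 : ℂ) • fp ((fp ^ k) u) := by
              rw [LinearMap.sub_apply, Module.End.mul_apply]
              congr 1
              have h2fp : (2 : Module.End ℂ V) * fp = (2 : ℂ) • fp := by
                rw [two_smul, two_mul]
              rw [h2fp, LinearMap.smul_apply]
      rw [h1, h2, ih, map_smul, ← h1, ← sub_smul]
      congr 1
      push_cast
      ring
  have main : ∀ k : ℕ, fm ((fp ^ k) u)
      = ((k : ℂ) * ((p : ℂ) + 1 - (k : ℂ))) • (fp ^ (k - 1)) u := by
    intro k
    induction k with
    | zero => simp [hfmbm m, hu]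
    | succ k ih =>
      have h1 : (fp ^ (k + 1)) u = fp ((fp ^ k) u) := by
        rw [pow_succ', Module.End.mul_apply]
      have h2 : fm (fp ((fp ^ k) u)) = fp (fm ((fp ^ k) u)) + X ((fp ^ k) u) := by
        have hfmfp : fm * fp = fp * fm + X := by rw [hXdef]; noncomm_ring
        calc fm (fp ((fp ^ k) u)) = (fm * fp) ((fp ^ k) u) := by rw [Module.End.mul_apply]
          _ = (fp * fm + X) ((fp ^ k) u) := by rw [hfmfp]
          _ = fp (fm ((fp ^ k) u)) + X ((fp ^ k) u) := by
              rw [LinearMap.add_apply, Module.End.mul_apply]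
      rw [h1, h2, ih, hXfpn k, map_smul]
      cases k with
      | zero =>
        simp
      | succ j =>
        have h3 : fp ((fp ^ (j + 1 - 1)) u) = (fp ^ (j + 1)) u := by
          rw [← Module.End.mul_apply, ← pow_succ']
          norm_num
        rw [h3]
        have h4 : (j + 1 + 1 - 1) = j + 1 := rfl
        rw [h4, ← add_smul]
        congr 1
        push_cast
        ring
  have hvA : vA bp fp vac m n = (fp ^ n) u := by
    rw [vA, Module.End.mul_apply, hu]
  have hvA2 : vA bp fp vac m (n - 1) = (fp ^ (n - 1)) u := by
    rw [vA, Module.End.mul_apply, hu]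
  rw [hvA, hvA2, main n]
end
end

section
/- Under the Fock-vacuum assumptions, for all integers m ≥ 1 and 1 ≤ n ≤ p: f⁻·|m,n,β⟩ = |m,n-1,α⟩ + (n-1)(p-n) |m,n-1,β⟩. -/
noncomputable section

theorem fm_action_beta {V : Type*} [AddCommGroup V] [Module ℂ V]
    (p : ℕ) (hp : 0 < p)
    (bp bm fp fm : Module.End ℂ V) (hrel : PBFRels bp bm fp fm)
    (vac : V) (hb0 : bm vac = 0) (hf0 : fm vac = 0)
    (hbb : bm (bp vac) = (p : ℂ) • vac) (hff : fm (fp vac) = (p : ℂ) • vac)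
    (hbf : bm (fp vac) = 0) (hfb : fm (bp vac) = 0)
    (m n : ℕ) (hm : 1 ≤ m) (hn1 : 1 ≤ n) (hn : n ≤ p) :
    fm (vB bp fp vac m n)
      = vA bp fp vac m (n - 1)
        + (((n : ℂ) - 1) * ((p : ℂ) - (n : ℂ))) • vB bp fp vac m (n - 1) := by
  
  obtain ⟨-, -, -, -, -, -, -, h8, -, -, -, -, -, -, -, -, -, h18, -, -, -, -,
    h23, -, -, -, -, -, -, -, -, h32⟩ := hrel
  simp only [pbComm, pbAcomm] at h8 h18 h23 h32
  rw [add_comm (bp * fm) (fm * bp)] at h23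
  set K : Module.End ℂ V := fm * bp + bp * fm with hKdef
  set N : Module.End ℂ V := fm * fp - fp * fm with hNdef
  have hKbp : K * bp = bp * K := sub_eq_zero.mp h8
  have hNbp : N * bp = bp * N := sub_eq_zero.mp h18
  have h23' : K * fp + fp * K = (2:ℂ) • bp := by rw [h23, two_mul, two_smul]
  have h32' : fp * N - N * fp = (2:ℂ) • fp := by rw [h32, two_mul, two_smul]
  have hKfpOp : K * fp = (2:ℂ) • bp - fp * K := eq_sub_of_add_eq h23'
  have hNfpOp : N * fp = fp * N - (2:ℂ) • fp := by
    rw [eq_sub_iff_add_eq, add_comm]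
    exact (sub_eq_iff_eq_add.mp h32').symm
  have hfmbpOp : fm * bp = K - bp * fm := by rw [hKdef]; abel
  have hfmfpOp : fm * fp = N + fp * fm := by rw [hNdef]; abel
  -- vector versions
  have hKfpv : ∀ x : V, K (fp x) = (2:ℂ) • bp x - fp (K x) := by
    intro x
    have h : (K * fp) x = ((2:ℂ) • bp - fp * K) x := by rw [hKfpOp]
    simpa [Module.End.mul_apply, LinearMap.sub_apply, LinearMap.smul_apply] using h
  have hNfpv : ∀ x : V, N (fp x) = fp (N x) - (2:ℂ) • fp x := by
    intro x
    have h : (N * fp) x = (fp * N - (2:ℂ) • fp) x := by rw [hNfpOp]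
    simpa [Module.End.mul_apply, LinearMap.sub_apply, LinearMap.smul_apply] using h
  have hKbpv : ∀ x : V, K (bp x) = bp (K x) := by
    intro x
    have h : (K * bp) x = (bp * K) x := by rw [hKbp]
    simpa [Module.End.mul_apply] using h
  have hNbpv : ∀ x : V, N (bp x) = bp (N x) := by
    intro x
    have h : (N * bp) x = (bp * N) x := by rw [hNbp]
    simpa [Module.End.mul_apply] using h
  have hfmbpv : ∀ x : V, fm (bp x) = K x - bp (fm x) := by
    intro x
    have h : (fm * bp) x = (K - bp * fm) x := by rw [hfmbpOp]
    simpa [Module.End.mul_apply, LinearMap.sub_apply] using h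
  have hfmfpv : ∀ x : V, fm (fp x) = N x + fp (fm x) := by
    intro x
    have h : (fm * fp) x = (N + fp * fm) x := by rw [hfmfpOp]
    simpa [Module.End.mul_apply, LinearMap.add_apply] using h
  -- power helpers
  have ebp : ∀ (j : ℕ) (x : V), bp ((bp ^ j) x) = (bp ^ (j+1)) x := by
    intro j x; rw [pow_succ']; simp [Module.End.mul_apply]
  have ebp2 : ∀ (j : ℕ) (x : V), (bp ^ j) (bp x) = (bp ^ (j+1)) x := by
    intro j x; rw [pow_succ]; simp [Module.End.mul_apply]
  have efp : ∀ (j : ℕ) (x : V), fp ((fp ^ j) x) = (fp ^ (j+1)) x := by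
    intro j x; rw [pow_succ']; simp [Module.End.mul_apply]
  have efp2 : ∀ (j : ℕ) (x : V), (fp ^ j) (fp x) = (fp ^ (j+1)) x := by
    intro j x; rw [pow_succ]; simp [Module.End.mul_apply]
  have hKpowv : ∀ (j : ℕ) (x : V), K ((bp ^ j) x) = (bp ^ j) (K x) := by
    intro j x
    have hcomm : K * bp ^ j = bp ^ j * K := Commute.pow_right hKbp j
    have h : (K * bp ^ j) x = (bp ^ j * K) x := by rw [hcomm]
    simpa [Module.End.mul_apply] using h
  have hNpowv : ∀ (j : ℕ) (x : V), N ((bp ^ j) x) = (bp ^ j) (N x) := by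
    intro j x
    have hcomm : N * bp ^ j = bp ^ j * N := Commute.pow_right hNbp j
    have h : (N * bp ^ j) x = (bp ^ j * N) x := by rw [hcomm]
    simpa [Module.End.mul_apply] using h
  have hNfppow : ∀ (k : ℕ) (x : V),
      N ((fp ^ k) x) = (fp ^ k) (N x) - (2 * (k:ℂ)) • ((fp ^ k) x) := by
    intro k
    induction k with
    | zero => intro x; simp
    | succ k ih =>
      intro x
      rw [← efp2 k x, ih (fp x), hNfpv x, map_sub, map_smul, efp2, efp2]
      match_scalars <;> push_cast <;> ring
  -- vacuum computations
  have hNvac : N vac = (p:ℂ) • vac := by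
    have : N vac = fm (fp vac) - fp (fm vac) := by
      rw [hNdef]; simp [LinearMap.sub_apply, Module.End.mul_apply]
    rw [this, hff, hf0, map_zero, sub_zero]
  have hKvac : K vac = 0 := by
    have : K vac = fm (bp vac) + bp (fm vac) := by
      rw [hKdef]; simp [LinearMap.add_apply, Module.End.mul_apply]
    rw [this, hfb, hf0, map_zero, add_zero]
  have hKfpvac : K (fp vac) = (2:ℂ) • bp vac := by
    rw [hKfpv, hKvac, map_zero, sub_zero]
  have hNfpvac : N (fp vac) = ((p:ℂ) - 2) • fp vac := by
    rw [hNfpv, hNvac, map_smul]; module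
  have hNbpvac : N (bp vac) = (p:ℂ) • bp vac := by
    rw [hNbpv, hNvac, map_smul]
  -- the vector u = R⁺|0⟩
  set u : V := Rplus bp fp vac with hudef
  have hu : u = (2:ℂ)⁻¹ • (bp (fp vac) + fp (bp vac)) := by
    rw [hudef]
    simp [Rplus, LinearMap.smul_apply, LinearMap.add_apply, Module.End.mul_apply]
  have hfmu : fm u = bp vac := by
    rw [hu, map_smul, map_add, hfmbpv (fp vac), hfmfpv (bp vac), hff, hfb,
      hKfpvac, hNbpvac, map_smul, map_zero, add_zero]
    module
  have hKu : K u = (2:ℂ) • bp (bp vac) := by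
    rw [hu, map_smul, map_add, hKbpv (fp vac), hKfpv (bp vac), hKfpvac,
      hKbpv vac, hKvac, map_zero, map_zero, sub_zero, map_smul]
    module
  have hNu : N u = ((p:ℂ) - 2) • u := by
    rw [hu, map_smul, map_add, hNbpv (fp vac), hNfpv (bp vac), hNfpvac,
      hNbpv vac, hNvac, map_smul, map_smul, map_smul]
    module
  -- fm through powers of bp applied to u
  have hfmbppow : ∀ j : ℕ, fm ((bp ^ j) u) = (bp ^ (j+1)) vac := by
    intro j
    induction j with
    | zero => simpa using hfmu
    | succ j ih =>
      rw [← ebp j u, hfmbpv, ih, hKpowv, hKu, map_smul, ebp2, ebp2, ebp]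
      module
  obtain ⟨m', rfl⟩ : ∃ m', m = m' + 1 := ⟨m - 1, (Nat.succ_pred_eq_of_pos hm).symm⟩
  obtain ⟨n', rfl⟩ : ∃ n', n = n' + 1 := ⟨n - 1, (Nat.succ_pred_eq_of_pos hn1).symm⟩
  set w : V := (bp ^ m') u with hwdef
  have hfmw : fm w = (bp ^ (m'+1)) vac := hfmbppow m'
  have hNw : N w = ((p:ℂ) - 2) • w := by
    rw [hwdef, hNpowv, hNu, map_smul]
  have hg : ∀ k : ℕ, fm ((fp ^ (k+1)) w)
      = (fp ^ (k+1)) ((bp ^ (m'+1)) vac)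
        + (((k:ℂ) + 1) * ((p:ℂ) - (k:ℂ) - 2)) • ((fp ^ k) w) := by
    intro k
    induction k with
    | zero =>
      have h1 : (fp ^ (0+1)) w = fp w := by rw [pow_one]
      have h2 : (fp ^ (0+1)) ((bp ^ (m'+1)) vac) = fp ((bp ^ (m'+1)) vac) := by
        rw [pow_one]
      rw [h1, h2, hfmfpv, hfmw, hNw]
      simp only [pow_zero, Module.End.one_apply]
      module
    | succ k ih =>
      rw [← efp (k+1) w, hfmfpv, ih, hNfppow, hNw, map_add, map_smul, map_smul,
        efp (k+1) ((bp ^ (m'+1)) vac), efp k w]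
      match_scalars <;> push_cast <;> ring
  -- unfold vB and vA
  have hvB : ∀ k : ℕ, vB bp fp vac (m'+1) (k+1) = (fp ^ k) w := by
    intro k
    rw [vB, if_neg (by simp), hwdef, hudef]
    simp [Module.End.mul_apply]
  have hvA : vA bp fp vac (m'+1) (n'+1-1) = (fp ^ n') ((bp ^ (m'+1)) vac) := by
    rw [vA]; simp [Module.End.mul_apply]
  rw [hvB n', hvA]
  cases n' with
  | zero =>
    simp only [pow_zero, Module.End.one_apply] at *
    rw [hfmw]
    have : vB bp fp vac (m'+1) (0+1-1) = 0 := by rw [vB, if_pos (by simp)]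
    rw [this]
    push_cast
    simp
  | succ k =>
    rw [hg k]
    have : vB bp fp vac (m'+1) (k+1+1-1) = (fp ^ k) w := by
      simpa using hvB k
    rw [this]
    match_scalars <;> push_cast <;> ring
end
end

section
/- Under the Fock-vacuum assumptions, for all integers m ≥ 0 and 0 ≤ n ≤ p: b⁺·|m,n,α⟩ = (-1)ⁿ |m+1,n,α⟩ + (-1)^(n-1) 2n |m+1,n,β⟩. -/
noncomputable section

lemma pb_key {V : Type*} [AddCommGroup V] [Module ℂ V]
    (bp fp K : Module.End ℂ V)
    (hbf : bp * fp = K - fp * bp) (hKf : K * fp = -(fp * K)) :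
    ∀ n : ℕ, bp * fp ^ n
      = ((-1 : ℂ) ^ n) • (fp ^ n * bp)
        + (((-1 : ℂ) ^ (n - 1)) * n) • (fp ^ (n - 1) * K) := by
  intro n
  induction n with
  | zero => simp
  | succ k ih =>
    have h1 : bp * fp ^ (k + 1) = (bp * fp ^ k) * fp := by
      rw [pow_succ, ← mul_assoc]
    rw [h1, ih, add_mul, smul_mul_assoc, smul_mul_assoc,
      mul_assoc, mul_assoc, hbf, hKf]
    cases k with
    | zero => simp [mul_sub]; abel
    | succ j =>
      simp only [Nat.add_sub_cancel, mul_sub, smul_sub, mul_neg, smul_neg]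
      have h2 : fp ^ (j + 1) * (fp * bp) = fp ^ (j + 2) * bp := by
        rw [← mul_assoc, ← pow_succ]
      have h3 : fp ^ j * (fp * K) = fp ^ (j + 1) * K := by
        rw [← mul_assoc, ← pow_succ]
      rw [h2, h3]
      match_scalars <;> (push_cast; ring)

theorem bp_action_alpha {V : Type*} [AddCommGroup V] [Module ℂ V]
    (p : ℕ) (hp : 0 < p)
    (bp bm fp fm : Module.End ℂ V) (hrel : PBFRels bp bm fp fm)
    (vac : V) (hb0 : bm vac = 0) (hf0 : fm vac = 0)
    (hbb : bm (bp vac) = (p : ℂ) • vac) (hff : fm (fp vac) = (p : ℂ) • vac)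
    (hbf : bm (fp vac) = 0) (hfb : fm (bp vac) = 0)
    (m n : ℕ) (hn : n ≤ p) :
    bp (vA bp fp vac m n)
      = ((-1 : ℂ) ^ n) • vA bp fp vac (m + 1) n
        + ((-1 : ℂ) ^ (n - 1) * 2 * (n : ℂ)) • vB bp fp vac (m + 1) n := by
  obtain ⟨-, -, -, -, -, -, -, -, -, -, h11, -, -, -, -, -, -, -, h19, -⟩ := hrel
  simp only [pbComm, pbAcomm] at h11 h19
  set K : Module.End ℂ V := bp * fp + fp * bp with hKdef
  have hbfK : bp * fp = K - fp * bp := by rw [hKdef]; abel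
  have hKf : K * fp = -(fp * K) := eq_neg_of_add_eq_zero_left h19
  have hKb : K * bp = bp * K := by
    have h := sub_eq_zero.mp h11
    rw [hKdef, add_comm (bp * fp)]
    exact h
  have hKbm : ∀ k : ℕ, K * bp ^ k = bp ^ k * K := fun k =>
    (Commute.pow_right hKb k).eq
  have key := pb_key bp fp K hbfK hKf n
  have expand : bp * (fp ^ n * bp ^ m)
      = ((-1 : ℂ) ^ n) • (fp ^ n * bp ^ (m + 1))
        + (((-1 : ℂ) ^ (n - 1)) * n) • (fp ^ (n - 1) * bp ^ m * K) := by
    calc bp * (fp ^ n * bp ^ m) = (bp * fp ^ n) * bp ^ m := by rw [mul_assoc]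
      _ = _ := by
          rw [key]
          simp only [add_mul, smul_mul_assoc, mul_assoc]
          rw [hKbm m]
          simp only [← pow_succ', ← pow_succ, ← mul_assoc]
  have happ : bp (vA bp fp vac m n) = (bp * (fp ^ n * bp ^ m)) vac := rfl
  rw [happ, expand]
  simp only [LinearMap.add_apply, LinearMap.smul_apply]
  congr 1
  cases n with
  | zero => simp [vB]
  | succ k =>
    have hvB : vB bp fp vac (m + 1) (k + 1)
        = (fp ^ k * bp ^ m * Rplus bp fp) vac := by
      simp [vB]
    rw [hvB]
    have hR : fp ^ k * bp ^ m * Rplus bp fp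
        = (2 : ℂ)⁻¹ • (fp ^ k * bp ^ m * K) := by
      rw [Rplus, ← hKdef, mul_smul_comm]
    rw [hR]
    simp only [LinearMap.smul_apply, Nat.add_sub_cancel, ← smul_assoc, smul_eq_mul]
    congr 1
    push_cast
    ring
end
end

section
/- Under the Fock-vacuum assumptions together with the adjointness assumptions, for all integers n ≥ p+1: |m,n,α⟩ = (f⁺)ⁿ(b⁺)ᵐ|0⟩ = 0 for every m ≥ 0, and |m,n,β⟩ = (f⁺)^(n-1)(b⁺)^(m-1)R⁺|0⟩ = 0 for every m ≥ 1. In particular f⁺·|m,p,α⟩ = 0 and f⁺·|m,p,β⟩ = 0. -/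
noncomputable section

private lemma PBF_comm_pow {V : Type*} [AddCommGroup V] [Module ℂ V]
    (a b : Module.End ℂ V) (h : a * b = b * a) (k : ℕ) (v : V) :
    a ((b ^ k) v) = (b ^ k) (a v) := by
  have h2 := (Commute.pow_right h k).eq
  calc a ((b ^ k) v) = (a * b ^ k) v := rfl
    _ = (b ^ k * a) v := by rw [h2]
    _ = _ := rfl

private lemma PBF_pow_apply {V : Type*} [AddCommGroup V] [Module ℂ V]
    (a : Module.End ℂ V) (j k : ℕ) (v : V) :
    (a ^ (j + k)) v = (a ^ j) ((a ^ k) v) := by rw [pow_add]; rfl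

private lemma PBF_pow_succ_apply {V : Type*} [AddCommGroup V] [Module ℂ V]
    (a : Module.End ℂ V) (n : ℕ) (v : V) :
    (a ^ (n + 1)) v = a ((a ^ n) v) := by rw [pow_succ']; rfl

private lemma PBF_C_fppow {V : Type*} [AddCommGroup V] [Module ℂ V]
    (fp C : Module.End ℂ V)
    (hCfp : ∀ w : V, C (fp w) = fp (C w) + (2:ℂ) • fp w)
    (w : V) (lam : ℂ) (hw : C w = lam • w) :
    ∀ n : ℕ, C ((fp ^ n) w) = (lam + 2 * n) • ((fp ^ n) w) := by
  intro n
  induction n with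
  | zero => simpa using hw
  | succ n ih =>
    rw [PBF_pow_succ_apply, hCfp, ih, map_smul]
    push_cast
    module

private lemma PBF_fm_fppow {V : Type*} [AddCommGroup V] [Module ℂ V]
    (fp fm C : Module.End ℂ V)
    (pfmfp : ∀ w : V, fm (fp w) = fp (fm w) - C w)
    (hCfp : ∀ w : V, C (fp w) = fp (C w) + (2:ℂ) • fp w)
    (w : V) (lam : ℂ) (hw : C w = lam • w) :
    ∀ n : ℕ, fm ((fp ^ (n + 1)) w)
      = (fp ^ (n + 1)) (fm w) - (((n : ℂ) + 1) * (lam + n)) • ((fp ^ n) w) := by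
  intro n
  induction n with
  | zero =>
    simp only [zero_add, pow_one, pow_zero, Module.End.one_apply, Nat.cast_zero]
    rw [pfmfp, hw]
    module
  | succ n ih =>
    rw [PBF_pow_succ_apply fp (n+1), pfmfp, ih,
      PBF_C_fppow fp C hCfp w lam hw (n+1), map_sub, map_smul,
      ← PBF_pow_succ_apply, ← PBF_pow_succ_apply]
    push_cast
    module

private lemma PBF_fm_bppow_vac {V : Type*} [AddCommGroup V] [Module ℂ V]
    (fm bp D : Module.End ℂ V)
    (pfmbp : ∀ w : V, fm (bp w) = D w - bp (fm w))
    (hDbp : D * bp = bp * D) (vac : V) (hfmv : fm vac = 0) (hDv : D vac = 0) :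
    ∀ m : ℕ, fm ((bp ^ m) vac) = 0 := by
  intro m
  induction m with
  | zero => simpa using hfmv
  | succ m ih =>
    rw [PBF_pow_succ_apply, pfmbp, ih, map_zero, PBF_comm_pow D bp hDbp, hDv,
      map_zero, sub_zero]

private lemma PBF_fm_Ypow {V : Type*} [AddCommGroup V] [Module ℂ V]
    (fm bp D : Module.End ℂ V)
    (pfmbp : ∀ w : V, fm (bp w) = D w - bp (fm w))
    (hDbp : D * bp = bp * D) (vac Rv : V)
    (hfmR : fm Rv = bp vac)
    (hDR : D Rv = bp (bp vac) + bp (bp vac)) :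
    ∀ k : ℕ, fm ((bp ^ k) Rv) = (bp ^ (k + 1)) vac := by
  intro k
  induction k with
  | zero => simpa [pow_one] using hfmR
  | succ k ih =>
    have h2 : bp (bp vac) = (bp ^ 2) vac := by
      rw [PBF_pow_succ_apply, pow_one]
    rw [PBF_pow_succ_apply, pfmbp, ih, PBF_comm_pow D bp hDbp, hDR, h2, map_add,
      ← PBF_pow_apply, ← PBF_pow_succ_apply]
    abel

theorem vanishing_above_p {V : Type*} [NormedAddCommGroup V] [InnerProductSpace ℂ V]
    (p : ℕ) (hp : 0 < p)
    (bp bm fp fm : Module.End ℂ V) (hrel : PBFRels bp bm fp fm)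
    (hadjb : ∀ x y : V, (inner ℂ (bm x) y : ℂ) = inner ℂ x (bp y))
    (hadjf : ∀ x y : V, (inner ℂ (fm x) y : ℂ) = inner ℂ x (fp y))
    (vac : V) (hb0 : bm vac = 0) (hf0 : fm vac = 0)
    (hbb : bm (bp vac) = (p : ℂ) • vac) (hff : fm (fp vac) = (p : ℂ) • vac)
    (hbf : bm (fp vac) = 0) (hfb : fm (bp vac) = 0) :
    (∀ m n : ℕ, p + 1 ≤ n → vA bp fp vac m n = 0) ∧
    (∀ m n : ℕ, 1 ≤ m → p + 1 ≤ n → vB bp fp vac m n = 0) ∧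
    (∀ m : ℕ, fp (vA bp fp vac m p) = 0) ∧
    (∀ m : ℕ, 1 ≤ m → fp (vB bp fp vac m p) = 0) := by
  obtain ⟨r1, r2, r3, r4, r5, r6, r7, r8, r9, r10, r11, r12, r13, r14, r15, r16,
    r17, r18, r19, r20, r21, r22, r23, r24, r25, r26, r27, r28, r29, r30, r31, r32⟩ := hrel
  simp only [pbComm, pbAcomm] at r8 r11 r17 r18 r19 r21 r23 r32
  have hCfp : (fp*fm - fm*fp) * fp = fp * (fp*fm - fm*fp) + 2*fp := by
    linear_combination (norm := noncomm_ring) r32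
  have hCbp : (fp*fm - fm*fp) * bp = bp * (fp*fm - fm*fp) := by
    linear_combination (norm := noncomm_ring) -r18
  have hDbp : (fm*bp + bp*fm) * bp = bp * (fm*bp + bp*fm) := by
    linear_combination (norm := noncomm_ring) r8
  have hEfp : (bp*bm + bm*bp) * fp = fp * (bp*bm + bm*bp) := by
    linear_combination (norm := noncomm_ring) r17
  have hGbp : (fp*bm + bm*fp) * bp = bp * (fp*bm + bm*fp) + 2*fp := by
    linear_combination (norm := noncomm_ring) r21
  have hFbp : (bp*fp + fp*bp) * bp = bp * (bp*fp + fp*bp) := by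
    linear_combination (norm := noncomm_ring) r11
  have hFfp : (bp*fp + fp*bp) * fp + fp * (bp*fp + fp*bp) = 0 := by
    linear_combination (norm := noncomm_ring) r19
  have hDfp : (fm*bp + bp*fm) * fp + fp * (fm*bp + bp*fm) = 2*bp := by
    linear_combination (norm := noncomm_ring) r23
  rw [two_mul] at hCfp hGbp hDfp
  -- pointwise decompositions
  have pfmfp : ∀ w : V, fm (fp w) = fp (fm w) - (fp*fm - fm*fp) w := by
    intro w
    simp only [LinearMap.sub_apply, Module.End.mul_apply]
    abel
  have pfmbp : ∀ w : V, fm (bp w) = (fm*bp + bp*fm) w - bp (fm w) := by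
    intro w
    simp only [LinearMap.add_apply, Module.End.mul_apply]
    abel
  have pfpbp : ∀ w : V, fp (bp w) = (bp*fp + fp*bp) w - bp (fp w) := by
    intro w
    simp only [LinearMap.add_apply, Module.End.mul_apply]
    abel
  have pbmbp : ∀ w : V, bm (bp w) = (bp*bm + bm*bp) w - bp (bm w) := by
    intro w
    simp only [LinearMap.add_apply, Module.End.mul_apply]
    abel
  have pbmfp : ∀ w : V, bm (fp w) = (fp*bm + bm*fp) w - fp (bm w) := by
    intro w
    simp only [LinearMap.add_apply, Module.End.mul_apply]
    abel
  -- pointwise versions of the operator identities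
  have pCfp : ∀ w : V, (fp*fm - fm*fp) (fp w) = fp ((fp*fm - fm*fp) w) + (2:ℂ) • fp w := by
    intro w
    have h : (fp*fm - fm*fp) (fp w) = fp ((fp*fm - fm*fp) w) + (fp w + fp w) :=
      DFunLike.congr_fun hCfp w
    rw [h, two_smul]
  have pCbp : ∀ w : V, (fp*fm - fm*fp) (bp w) = bp ((fp*fm - fm*fp) w) :=
    fun w => DFunLike.congr_fun hCbp w
  have pDbp : ∀ w : V, (fm*bp + bp*fm) (bp w) = bp ((fm*bp + bp*fm) w) :=
    fun w => DFunLike.congr_fun hDbp w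
  have pEfp : ∀ w : V, (bp*bm + bm*bp) (fp w) = fp ((bp*bm + bm*bp) w) :=
    fun w => DFunLike.congr_fun hEfp w
  have pFbp : ∀ w : V, (bp*fp + fp*bp) (bp w) = bp ((bp*fp + fp*bp) w) :=
    fun w => DFunLike.congr_fun hFbp w
  have pGbp : ∀ w : V, (fp*bm + bm*fp) (bp w) = bp ((fp*bm + bm*fp) w) + (fp w + fp w) :=
    fun w => DFunLike.congr_fun hGbp w
  have pFfp : ∀ w : V, (bp*fp + fp*bp) (fp w) + fp ((bp*fp + fp*bp) w) = 0 :=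
    fun w => DFunLike.congr_fun hFfp w
  have pDfp : ∀ w : V, (fm*bp + bp*fm) (fp w) = (bp w + bp w) - fp ((fm*bp + bp*fm) w) := by
    intro w
    have h : (fm*bp + bp*fm) (fp w) + fp ((fm*bp + bp*fm) w) = bp w + bp w :=
      DFunLike.congr_fun hDfp w
    exact eq_sub_of_add_eq h
  -- vacuum values
  have hCvac : (fp*fm - fm*fp) vac = -((p:ℂ)) • vac := by
    simp only [LinearMap.sub_apply, Module.End.mul_apply, hf0, hff, map_zero]
    module
  have hDvac : (fm*bp + bp*fm) vac = 0 := by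
    simp only [LinearMap.add_apply, Module.End.mul_apply, hf0, hfb, map_zero]
    abel
  have hEvac : (bp*bm + bm*bp) vac = (p:ℂ) • vac := by
    simp only [LinearMap.add_apply, Module.End.mul_apply, hb0, hbb, map_zero]
    module
  have hGvac : (fp*bm + bm*fp) vac = 0 := by
    simp only [LinearMap.add_apply, Module.End.mul_apply, hb0, hbf, map_zero]
    abel
  -- the vector R⁺|0⟩
  have hRvval : (Rplus bp fp) vac = (2:ℂ)⁻¹ • (bp (fp vac) + fp (bp vac)) := by
    simp [Rplus, LinearMap.smul_apply, LinearMap.add_apply, Module.End.mul_apply]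
  have hfmRv : fm ((Rplus bp fp) vac) = bp vac := by
    simp only [hRvval, map_smul, map_add, pfmbp, pfmfp, pDfp, pCbp, hDvac, hCvac,
      hff, hfb, hf0, hb0, map_zero, map_smul, sub_zero, zero_sub, neg_neg, map_neg,
      smul_zero, neg_smul]
    module
  have hDRv : (fm*bp + bp*fm) ((Rplus bp fp) vac) = bp (bp vac) + bp (bp vac) := by
    simp only [hRvval, map_smul, map_add, pDbp, pDfp, hDvac, hf0, hb0, map_zero,
      sub_zero, zero_sub, neg_neg, map_neg, smul_zero, neg_smul]
    module
  have hCRv : (fp*fm - fm*fp) ((Rplus bp fp) vac)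
      = ((2:ℂ) - p) • ((Rplus bp fp) vac) := by
    simp only [hRvval, map_smul, map_add, pCbp, pCfp, hCvac, hf0, hb0, map_zero,
      sub_zero, zero_sub, neg_neg, map_neg, smul_zero, neg_smul]
    module
  -- action on the two families
  have hCX : ∀ m : ℕ, (fp*fm - fm*fp) ((bp^m) vac) = (-((p:ℂ))) • ((bp^m) vac) := by
    intro m
    rw [PBF_comm_pow _ bp hCbp, hCvac, map_smul]
  have hfmX : ∀ m : ℕ, fm ((bp^m) vac) = 0 :=
    PBF_fm_bppow_vac fm bp _ pfmbp hDbp vac hf0 hDvac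
  have hfmY : ∀ k : ℕ, fm ((bp^k) ((Rplus bp fp) vac)) = (bp^(k+1)) vac :=
    PBF_fm_Ypow fm bp _ pfmbp hDbp vac _ hfmRv hDRv
  have hCY : ∀ k : ℕ, (fp*fm - fm*fp) ((bp^k) ((Rplus bp fp) vac))
      = ((2:ℂ) - p) • ((bp^k) ((Rplus bp fp) vac)) := by
    intro k
    rw [PBF_comm_pow _ bp hCbp, hCRv, map_smul]
  -- key α-vanishing
  have hKA : ∀ m : ℕ, (fp^(p+1)) ((bp^m) vac) = 0 := by
    intro m
    have hz : fm ((fp^(p+1)) ((bp^m) vac)) = 0 := by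
      rw [PBF_fm_fppow fp fm _ pfmfp pCfp _ _ (hCX m) p, hfmX m, map_zero, zero_sub]
      have hc : -((p:ℕ):ℂ) + ((p:ℕ):ℂ) = 0 := by ring
      rw [hc, mul_zero, zero_smul, neg_zero]
    have h0 : (inner ℂ ((fp^(p+1)) ((bp^m) vac)) ((fp^(p+1)) ((bp^m) vac)) : ℂ) = 0 := by
      nth_rewrite 2 [PBF_pow_succ_apply fp p ((bp^m) vac)]
      rw [← hadjf, hz, inner_zero_left]
    exact inner_self_eq_zero.mp h0
  -- key β-vanishing
  have hKB : ∀ k : ℕ, (fp^p) ((bp^k) ((Rplus bp fp) vac)) = 0 := by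
    rcases Nat.lt_or_ge p 2 with hlt | hge
    · -- the case p = 1
      have hp1 : p = 1 := by omega
      subst hp1
      have hfp2 : fp (fp vac) = 0 := by
        have h := hKA 0
        rw [pow_zero, Module.End.one_apply, PBF_pow_succ_apply, pow_one] at h
        exact h
      have w1 : fm (fp (bp vac)) = bp vac := by
        rw [pfmfp, hfb, map_zero, pCbp, hCvac, map_smul, zero_sub]
        norm_num
      have w2 : bm (fp (bp vac)) = fp vac := by
        rw [pbmfp, pGbp, hGvac, map_zero, zero_add, hbb, map_smul]
        norm_num
      have w3 : fm (bp (fp vac)) = bp vac := by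
        rw [pfmbp, pDfp, hDvac, map_zero, sub_zero, hff, map_smul]
        norm_num
      have w4 : bm (bp (fp vac)) = fp vac := by
        rw [pbmbp, pEfp, hEvac, map_smul, hbf, map_zero, sub_zero]
        norm_num
      have ibb : (inner ℂ (bp vac) (bp vac) : ℂ) = inner ℂ vac vac := by
        rw [← hadjb, hbb]
        simp
      have iff2 : (inner ℂ (fp vac) (fp vac) : ℂ) = inner ℂ vac vac := by
        rw [← hadjf, hff]
        simp
      have h0 : (inner ℂ (fp (bp vac) - bp (fp vac)) (fp (bp vac) - bp (fp vac)) : ℂ) = 0 := by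
        rw [inner_sub_sub_self]
        have A1 : (inner ℂ (fp (bp vac)) (fp (bp vac)) : ℂ) = inner ℂ vac vac := by
          rw [← hadjf, w1, ibb]
        have A2 : (inner ℂ (fp (bp vac)) (bp (fp vac)) : ℂ) = inner ℂ vac vac := by
          rw [← hadjb, w2, iff2]
        have A3 : (inner ℂ (bp (fp vac)) (fp (bp vac)) : ℂ) = inner ℂ vac vac := by
          rw [← hadjf, w3, ibb]
        have A4 : (inner ℂ (bp (fp vac)) (bp (fp vac)) : ℂ) = inner ℂ vac vac := by
          rw [← hadjb, w4, iff2]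
        rw [A1, A2, A3, A4]
        ring
      have hswap : fp (bp vac) = bp (fp vac) :=
        sub_eq_zero.mp (inner_self_eq_zero.mp h0)
      have hRv1 : (Rplus bp fp) vac = bp (fp vac) := by
        rw [hRvval, hswap]
        module
      have hFfpv : (bp*fp + fp*bp) (fp vac) = 0 := by
        have efb : fp (bp (fp vac)) = (bp*fp + fp*bp) (fp vac) := by
          rw [pfpbp (fp vac), hfp2, map_zero, sub_zero]
        have e1 : (bp*fp + fp*bp) (fp vac) + fp (bp (fp vac) + fp (bp vac)) = 0 :=
          pFfp vac
        rw [hswap, map_add, efb] at e1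
        have e3 : (3:ℂ) • ((bp*fp + fp*bp) (fp vac)) = 0 := by
          linear_combination (norm := module) e1
        exact (smul_eq_zero.mp e3).resolve_left (by norm_num)
      have hfpbk : ∀ j : ℕ, fp ((bp^j) (fp vac)) = 0 := by
        intro j
        induction j with
        | zero => simpa using hfp2
        | succ j ih =>
          rw [PBF_pow_succ_apply, pfpbp, PBF_comm_pow _ bp hFbp, hFfpv, map_zero,
            ih, map_zero, zero_sub, neg_zero]
      intro k
      rw [pow_one, hRv1,
        show (bp^k) (bp (fp vac)) = (bp^(k+1)) (fp vac) from by rw [pow_succ]; rfl]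
      exact hfpbk (k+1)
    · -- the case p ≥ 2
      obtain ⟨q, rfl⟩ : ∃ q, p = q + 1 + 1 := ⟨p - 2, by omega⟩
      intro k
      have h1 := PBF_fm_fppow fp fm _ pfmfp pCfp _ _ (hCY k) (q+1)
      rw [hfmY k] at h1
      have h2 := PBF_fm_fppow fp fm _ pfmfp pCfp _ _ (hCY k) q
      rw [hfmY k] at h2
      have hc2 : (((q:ℕ):ℂ)+1) * (((2:ℂ) - ((q+1+1:ℕ):ℂ)) + ((q:ℕ):ℂ)) = 0 := by
        push_cast
        ring
      rw [hc2, zero_smul, sub_zero] at h2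
      have h3 := PBF_fm_fppow fp fm _ pfmfp pCfp _ _ (hCX (k+1)) (q+1)
      rw [hfmX (k+1), map_zero, zero_sub] at h3
      have eB : (inner ℂ ((fp^(q+1)) ((bp^k) ((Rplus bp fp) vac)))
          ((fp^(q+1)) ((bp^k) ((Rplus bp fp) vac))) : ℂ)
          = inner ℂ ((fp^(q+1)) ((bp^(k+1)) vac)) ((fp^q) ((bp^k) ((Rplus bp fp) vac))) := by
        nth_rewrite 2 [PBF_pow_succ_apply fp q ((bp^k) ((Rplus bp fp) vac))]
        rw [← hadjf, h2]
      have eA : (inner ℂ ((fp^(q+1+1)) ((bp^(k+1)) vac))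
          ((fp^(q+1)) ((bp^k) ((Rplus bp fp) vac))) : ℂ)
          = -((starRingEnd ℂ) ((((q+1:ℕ):ℂ)+1) * (-(((q+1+1:ℕ):ℂ)) + ((q+1:ℕ):ℂ)))
              * inner ℂ ((fp^(q+1)) ((bp^(k+1)) vac)) ((fp^q) ((bp^k) ((Rplus bp fp) vac)))) := by
        nth_rewrite 1 [PBF_pow_succ_apply fp q ((bp^k) ((Rplus bp fp) vac))]
        rw [← hadjf, h3, inner_neg_left, inner_smul_left]
      have h0 : (inner ℂ ((fp^(q+1+1)) ((bp^k) ((Rplus bp fp) vac)))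
          ((fp^(q+1+1)) ((bp^k) ((Rplus bp fp) vac))) : ℂ) = 0 := by
        nth_rewrite 2 [PBF_pow_succ_apply fp (q+1) ((bp^k) ((Rplus bp fp) vac))]
        rw [← hadjf, h1, inner_sub_left, inner_smul_left, eA, eB]
        simp only [map_mul, map_add, map_sub, map_neg, map_one, map_ofNat,
          Complex.conj_natCast]
        push_cast
        ring
      exact inner_self_eq_zero.mp h0
  refine ⟨?_, ?_, ?_, ?_⟩
  · intro m n hn
    obtain ⟨j, rfl⟩ : ∃ j, n = j + (p+1) := ⟨n - (p+1), by omega⟩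
    simp only [vA, Module.End.mul_apply]
    rw [PBF_pow_apply, hKA, map_zero]
  · intro m n hm hn
    obtain ⟨m', rfl⟩ : ∃ m', m = m' + 1 := ⟨m - 1, by omega⟩
    obtain ⟨j, rfl⟩ : ∃ j, n = (j + p) + 1 := ⟨n - p - 1, by omega⟩
    rw [vB, if_neg (by omega)]
    simp only [Nat.add_sub_cancel, Module.End.mul_apply]
    rw [PBF_pow_apply, hKB, map_zero]
  · intro m
    simp only [vA, Module.End.mul_apply]
    rw [← PBF_pow_succ_apply]
    exact hKA m
  · intro m hm
    obtain ⟨m', rfl⟩ : ∃ m', m = m' + 1 := ⟨m - 1, by omega⟩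
    rw [vB, if_neg (by omega)]
    simp only [Nat.add_sub_cancel, Module.End.mul_apply]
    rw [← PBF_pow_succ_apply, Nat.sub_add_cancel hp]
    exact hKB m'
end
end

section
/- Under the Fock-vacuum assumptions together with the adjointness assumptions, for every integer m ≥ 1: |m,p,β⟩ = (1/p) |m,p,α⟩, i.e. (f⁺)^(p-1)(b⁺)^(m-1)R⁺|0⟩ = (1/p)(f⁺)ᵖ(b⁺)ᵐ|0⟩. -/
noncomputable section

theorem beta_parallel_alpha_at_p {V : Type*} [NormedAddCommGroup V] [InnerProductSpace ℂ V]
    (p : ℕ) (hp : 0 < p)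
    (bp bm fp fm : Module.End ℂ V) (hrel : PBFRels bp bm fp fm)
    (hadjb : ∀ x y : V, (inner ℂ (bm x) y : ℂ) = inner ℂ x (bp y))
    (hadjf : ∀ x y : V, (inner ℂ (fm x) y : ℂ) = inner ℂ x (fp y))
    (vac : V) (hb0 : bm vac = 0) (hf0 : fm vac = 0)
    (hbb : bm (bp vac) = (p : ℂ) • vac) (hff : fm (fp vac) = (p : ℂ) • vac)
    (hbf : bm (fp vac) = 0) (hfb : fm (bp vac) = 0)
    (m : ℕ) (hm : 1 ≤ m) :
    vB bp fp vac m p = ((p : ℂ))⁻¹ • vA bp fp vac m p := by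
  -- destruct relations (we only need some of them)
  obtain ⟨-, -, -, -, -, -, -, h8, -, -, h11, -, -, -, -, h16,
    h17, h18, h19, -, h21, h22, h23, h24, -, -, -, -, -, -, h31, h32⟩ := hrel
  simp only [pbComm, pbAcomm] at h8 h11 h16 h17 h18 h19 h21 h22 h23 h24 h31 h32
  obtain ⟨R, hR⟩ : ∃ R : Module.End ℂ V, R = Rplus bp fp := ⟨_, rfl⟩
  obtain ⟨A0, hA0⟩ : ∃ A0 : Module.End ℂ V, A0 = fm * bp + bp * fm := ⟨_, rfl⟩
  obtain ⟨F0, hF0⟩ : ∃ F0 : Module.End ℂ V, F0 = fm * fp - fp * fm := ⟨_, rfl⟩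
  obtain ⟨B0, hB0⟩ : ∃ B0 : Module.End ℂ V, B0 = bm * bp + bp * bm := ⟨_, rfl⟩
  obtain ⟨C0, hC0⟩ : ∃ C0 : Module.End ℂ V, C0 = bm * fp + fp * bm := ⟨_, rfl⟩
  -- operator identities
  have oAbp : A0 * bp = bp * A0 := by
    rw [hA0, ← sub_eq_zero]; rw [← sub_eq_zero] at h8; rw [← h8]; noncomm_ring
  have oAfp : A0 * fp = (bp + bp) - fp * A0 := by
    rw [hA0, ← sub_eq_zero]; rw [← sub_eq_zero] at h23; rw [← h23]; noncomm_ring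
  have oFfp : F0 * fp = fp * F0 - (fp + fp) := by
    rw [hF0, ← sub_eq_zero, ← neg_eq_zero]; rw [← sub_eq_zero] at h32; rw [← h32]; noncomm_ring
  have oFbp : F0 * bp = bp * F0 := by
    rw [hF0, ← sub_eq_zero]; rw [← sub_eq_zero] at h18; rw [← h18]; noncomm_ring
  have oBbp : B0 * bp = bp * B0 + (bp + bp) := by
    rw [hB0, ← sub_eq_zero, ← neg_eq_zero]; rw [← sub_eq_zero] at h31; rw [← h31]; noncomm_ring
  have oBfp : B0 * fp = fp * B0 := by
    rw [hB0, ← sub_eq_zero]; rw [← sub_eq_zero] at h17; rw [← h17]; noncomm_ring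
  have oCbp : C0 * bp = bp * C0 + (fp + fp) := by
    rw [hC0, ← sub_eq_zero]; rw [← sub_eq_zero] at h21; rw [← h21]; noncomm_ring
  -- identities involving R
  have half2 : ∀ X : Module.End ℂ V, (2:ℂ)⁻¹ • (X + X) = X := by
    intro X; rw [← two_smul ℂ, smul_smul]; norm_num
  have hS : (2:ℂ) • R = bp * fp + fp * bp := by
    rw [hR, Rplus, smul_smul]; norm_num
  have oSbp : (bp * fp + fp * bp) * bp = bp * (bp * fp + fp * bp) := by
    rw [← sub_eq_zero]; rw [← sub_eq_zero] at h11; rw [← h11]; noncomm_ring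
  have oRbp : R * bp = bp * R := by
    have h2 : ((2:ℂ) • R) * bp = bp * ((2:ℂ) • R) := by
      rw [hS]; exact oSbp
    rw [smul_mul_assoc, mul_smul_comm] at h2
    exact smul_right_injective _ (by norm_num) h2
  have oSfm : fm * (bp * fp + fp * bp) = (bp + bp) - (bp * fp + fp * bp) * fm := by
    rw [← sub_eq_zero]; rw [← sub_eq_zero] at h24; rw [← h24]; noncomm_ring
  have ofmR : fm * R = bp - R * fm := by
    have h2 := congrArg (fun z => (2:ℂ)⁻¹ • z) (by rw [hS]; exact oSfm :
      fm * ((2:ℂ) • R) = (bp + bp) - ((2:ℂ) • R) * fm)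
    simp only [mul_smul_comm, smul_mul_assoc, smul_sub, smul_add, smul_smul, half2] at h2
    norm_num at h2
    exact h2
  have oSbm : bm * (bp * fp + fp * bp) = (bp * fp + fp * bp) * bm + (fp + fp) := by
    rw [← sub_eq_zero, ← neg_eq_zero]; rw [← sub_eq_zero] at h22; rw [← h22]; noncomm_ring
  have obmR : bm * R = R * bm + fp := by
    have h2 := congrArg (fun z => (2:ℂ)⁻¹ • z) (by rw [hS]; exact oSbm :
      bm * ((2:ℂ) • R) = ((2:ℂ) • R) * bm + (fp + fp))
    simp only [mul_smul_comm, smul_mul_assoc, smul_sub, smul_add, smul_smul, half2] at h2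
    norm_num at h2
    exact h2
  have oSdef : bp * fp = (2:ℂ) • R - fp * bp := eq_sub_of_add_eq hS.symm
  -- F0 and R
  have oFS : F0 * (bp * fp + fp * bp)
      = (bp * fp + fp * bp) * F0 - ((bp * fp + fp * bp) + (bp * fp + fp * bp)) := by
    calc F0 * (bp * fp + fp * bp) = (F0 * bp) * fp + (F0 * fp) * bp := by noncomm_ring
    _ = (bp * F0) * fp + (fp * F0 - (fp + fp)) * bp := by rw [oFbp, oFfp]
    _ = bp * (F0 * fp) + fp * (F0 * bp) - (fp * bp + fp * bp) := by noncomm_ring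
    _ = bp * (fp * F0 - (fp + fp)) + fp * (bp * F0) - (fp * bp + fp * bp) := by rw [oFfp, oFbp]
    _ = (bp * fp + fp * bp) * F0 - ((bp * fp + fp * bp) + (bp * fp + fp * bp)) := by noncomm_ring
  have oFR : F0 * R = R * F0 - (2:ℂ) • R := by
    have h2 := congrArg (fun z => (2:ℂ)⁻¹ • z) (by rw [hS]; exact oFS :
      F0 * ((2:ℂ) • R) = ((2:ℂ) • R) * F0 - (((2:ℂ) • R) + ((2:ℂ) • R)))
    simp only [mul_smul_comm, smul_mul_assoc, smul_sub, smul_add, smul_smul, half2] at h2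
    norm_num at h2
    exact h2
  -- A0 and R
  have oAS : A0 * (bp * fp + fp * bp)
      = ((bp * bp + bp * bp) + (bp * bp + bp * bp)) - (bp * fp + fp * bp) * A0 := by
    calc A0 * (bp * fp + fp * bp) = (A0 * bp) * fp + (A0 * fp) * bp := by noncomm_ring
    _ = (bp * A0) * fp + ((bp + bp) - fp * A0) * bp := by rw [oAbp, oAfp]
    _ = bp * (A0 * fp) + (bp * bp + bp * bp) - fp * (A0 * bp) := by noncomm_ring
    _ = bp * ((bp + bp) - fp * A0) + (bp * bp + bp * bp) - fp * (bp * A0) := by rw [oAfp, oAbp]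
    _ = ((bp * bp + bp * bp) + (bp * bp + bp * bp)) - (bp * fp + fp * bp) * A0 := by noncomm_ring
  have oAR : A0 * R = (bp * bp + bp * bp) - R * A0 := by
    have h2 := congrArg (fun z => (2:ℂ)⁻¹ • z) (by rw [hS]; exact oAS :
      A0 * ((2:ℂ) • R)
        = ((bp * bp + bp * bp) + (bp * bp + bp * bp)) - ((2:ℂ) • R) * A0)
    simp only [mul_smul_comm, smul_mul_assoc, smul_sub, smul_add, smul_smul, half2] at h2
    norm_num at h2
    exact h2
  -- B0 and R
  have oBS : B0 * (bp * fp + fp * bp)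
      = (bp * fp + fp * bp) * B0 + ((bp * fp + fp * bp) + (bp * fp + fp * bp)) := by
    calc B0 * (bp * fp + fp * bp) = (B0 * bp) * fp + (B0 * fp) * bp := by noncomm_ring
    _ = (bp * B0 + (bp + bp)) * fp + (fp * B0) * bp := by rw [oBbp, oBfp]
    _ = bp * (B0 * fp) + (bp * fp + bp * fp) + fp * (B0 * bp) := by noncomm_ring
    _ = bp * (fp * B0) + (bp * fp + bp * fp) + fp * (bp * B0 + (bp + bp)) := by rw [oBfp, oBbp]
    _ = (bp * fp + fp * bp) * B0 + ((bp * fp + fp * bp) + (bp * fp + fp * bp)) := by noncomm_ring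
  have oBR : B0 * R = R * B0 + (2:ℂ) • R := by
    have h2 := congrArg (fun z => (2:ℂ)⁻¹ • z) (by rw [hS]; exact oBS :
      B0 * ((2:ℂ) • R) = ((2:ℂ) • R) * B0 + (((2:ℂ) • R) + ((2:ℂ) • R)))
    simp only [mul_smul_comm, smul_mul_assoc, smul_sub, smul_add, smul_smul, half2] at h2
    norm_num at h2
    exact h2
  -- pointwise versions
  have appt : ∀ {X Y : Module.End ℂ V}, X = Y → ∀ x : V, X x = Y x :=
    fun h x => by rw [h]
  have pAbp : ∀ x : V, A0 (bp x) = bp (A0 x) := fun x => by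
    have := appt oAbp x; simpa [Module.End.mul_apply] using this
  have pAfp : ∀ x : V, A0 (fp x) = (bp x + bp x) - fp (A0 x) := fun x => by
    have := appt oAfp x; simpa [Module.End.mul_apply] using this
  have pFbp : ∀ x : V, F0 (bp x) = bp (F0 x) := fun x => by
    have := appt oFbp x; simpa [Module.End.mul_apply] using this
  have pFfp : ∀ x : V, F0 (fp x) = fp (F0 x) - (fp x + fp x) := fun x => by
    have := appt oFfp x; simpa [Module.End.mul_apply] using this
  have pBbp : ∀ x : V, B0 (bp x) = bp (B0 x) + (bp x + bp x) := fun x => by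
    have := appt oBbp x; simpa [Module.End.mul_apply] using this
  have pCbp : ∀ x : V, C0 (bp x) = bp (C0 x) + (fp x + fp x) := fun x => by
    have := appt oCbp x; simpa [Module.End.mul_apply] using this
  have pRbp : ∀ x : V, R (bp x) = bp (R x) := fun x => by
    have := appt oRbp x; simpa [Module.End.mul_apply] using this
  have pfmR : ∀ x : V, fm (R x) = bp x - R (fm x) := fun x => by
    have := appt ofmR x; simpa [Module.End.mul_apply] using this
  have pbmR : ∀ x : V, bm (R x) = R (bm x) + fp x := fun x => by
    have := appt obmR x; simpa [Module.End.mul_apply] using this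
  have pbpfp : ∀ x : V, bp (fp x) = (2:ℂ) • R x - fp (bp x) := fun x => by
    have := appt oSdef x; simpa [Module.End.mul_apply] using this
  have pFR : ∀ x : V, F0 (R x) = R (F0 x) - (2:ℂ) • R x := fun x => by
    have := appt oFR x; simpa [Module.End.mul_apply] using this
  have pAR : ∀ x : V, A0 (R x) = (bp (bp x) + bp (bp x)) - R (A0 x) := fun x => by
    have := appt oAR x; simpa [Module.End.mul_apply] using this
  have pBR : ∀ x : V, B0 (R x) = R (B0 x) + (2:ℂ) • R x := fun x => by
    have := appt oBR x; simpa [Module.End.mul_apply] using this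
  have pfmbp : ∀ x : V, fm (bp x) = A0 x - bp (fm x) := fun x => by
    rw [hA0]; simp [Module.End.mul_apply]
  have pfmfp : ∀ x : V, fm (fp x) = fp (fm x) + F0 x := fun x => by
    rw [hF0]; simp [Module.End.mul_apply]
  have pbmbp : ∀ x : V, bm (bp x) = B0 x - bp (bm x) := fun x => by
    rw [hB0]; simp [Module.End.mul_apply]
  have pbmfp : ∀ x : V, bm (fp x) = C0 x - fp (bm x) := fun x => by
    rw [hC0]; simp [Module.End.mul_apply]
  -- vacuum values
  have vA0 : A0 vac = 0 := by
    rw [hA0]; simp [Module.End.mul_apply, hfb, hf0]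
  have vF0 : F0 vac = (p:ℂ) • vac := by
    rw [hF0]; simp [Module.End.mul_apply, hff, hf0]
  have vB0 : B0 vac = (p:ℂ) • vac := by
    rw [hB0]; simp [Module.End.mul_apply, hbb, hb0]
  have vC0 : C0 vac = 0 := by
    rw [hC0]; simp [Module.End.mul_apply, hbf, hb0]
  have vfmR : fm (R vac) = bp vac := by
    rw [pfmR, hf0, map_zero, sub_zero]
  have vbmR : bm (R vac) = fp vac := by
    rw [pbmR, hb0, map_zero, zero_add]
  have vFR : F0 (R vac) = ((p:ℂ) - 2) • R vac := by
    rw [pFR, vF0, map_smul]; module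
  have vBR : B0 (R vac) = ((p:ℂ) + 2) • R vac := by
    rw [pBR, vB0, map_smul]; module
  have vAR : A0 (R vac) = bp (bp vac) + bp (bp vac) := by
    rw [pAR, vA0, map_zero, sub_zero]
  -- power/application helpers
  have hps : ∀ (g : Module.End ℂ V) (k : ℕ) (x : V), (g^(k+1)) x = g ((g^k) x) := by
    intro g k x; rw [pow_succ']; exact Module.End.mul_apply _ _ _
  have hshift : ∀ (g : Module.End ℂ V) (k : ℕ) (x : V), (g^(k+1)) x = (g^k) (g x) := by
    intro g k x; rw [pow_succ]; exact Module.End.mul_apply _ _ _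
  have hgp : ∀ (g : Module.End ℂ V) (k : ℕ) (x : V), g ((g^k) x) = (g^k) (g x) := by
    intro g k x; rw [← hps, hshift]
  have Gbp : ∀ (T : Module.End ℂ V), (∀ x, T (bp x) = bp (T x)) →
      ∀ (k : ℕ) (x : V), T ((bp^k) x) = (bp^k) (T x) := by
    intro T hT k
    induction k with
    | zero => intro x; simp
    | succ n ih => intro x; rw [hps, hT, ih, ← hps]
  -- fm on bosonic towers
  have L2 : ∀ k : ℕ, fm ((bp^k) vac) = 0 := by
    intro k
    induction k with
    | zero => simpa using hf0
    | succ n ih =>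
      rw [hps, pfmbp, Gbp A0 pAbp, vA0, map_zero, ih, map_zero, sub_zero]
  have L9 : ∀ k : ℕ, fm ((bp^k) (R vac)) = (bp^k) (bp vac) := by
    intro k
    induction k with
    | zero => simpa using vfmR
    | succ n ih =>
      rw [hps, pfmbp, Gbp A0 pAbp, vAR, ih, hgp, map_add]
      abel
  -- F0 eigenvectors through fp powers
  have LFe : ∀ (n : ℕ) (x : V) (c : ℂ), F0 x = c • x →
      F0 ((fp^n) x) = (c - 2*(n:ℂ)) • ((fp^n) x) := by
    intro n
    induction n with
    | zero => intro x c hx; simpa using hx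
    | succ n ih =>
      intro x c hx
      rw [hps, pFfp, ih x c hx, map_smul, ← hps]
      push_cast
      module
  -- main fm-through-fp-powers lemma
  have L5 : ∀ (n : ℕ) (x x0 : V) (c : ℂ), fm x = x0 → F0 x = c • x →
      fm ((fp^(n+1)) x) = (fp^(n+1)) x0 + (((n:ℂ)+1)*(c - (n:ℂ))) • ((fp^n) x) := by
    intro n
    induction n with
    | zero =>
      intro x x0 c hx hFx
      rw [hps]
      simp only [pow_zero, pow_one, Module.End.one_apply, zero_add]
      rw [pfmfp, hx, hFx]
      push_cast
      module
    | succ n ih =>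
      intro x x0 c hx hFx
      rw [hps, pfmfp, ih x x0 c hx hFx, LFe (n+1) x c hFx, map_add, map_smul, ← hps, ← hps]
      push_cast
      module
  -- B0 eigenvectors through bp powers
  have LBgen : ∀ (k : ℕ) (x : V) (c : ℂ), B0 x = c • x →
      B0 ((bp^k) x) = (c + 2*(k:ℂ)) • ((bp^k) x) := by
    intro k
    induction k with
    | zero => intro x c hx; simpa using hx
    | succ n ih =>
      intro x c hx
      rw [hps, pBbp, ih x c hx, map_smul, ← hps]
      push_cast
      module
  -- adjoints
  have hadjb' : ∀ x y : V, (inner ℂ (bp x) y : ℂ) = inner ℂ x (bm y) := by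
    intro x y; rw [← inner_conj_symm, ← hadjb, inner_conj_symm]
  have hadjf' : ∀ x y : V, (inner ℂ (fp x) y : ℂ) = inner ℂ x (fm y) := by
    intro x y; rw [← inner_conj_symm, ← hadjf, inner_conj_symm]
  have adjpow : ∀ (g h : Module.End ℂ V), (∀ x y : V, (inner ℂ (g x) y : ℂ) = inner ℂ x (h y)) →
      ∀ (k : ℕ) (x y : V), (inner ℂ ((g^k) x) y : ℂ) = inner ℂ x ((h^k) y) := by
    intro g h hgh k
    induction k with
    | zero => intro x y; simp
    | succ n ih => intro x y; rw [hps, hgh, ih, ← hshift]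
  -- the p = 1 case: strong induction
  have key1 : p = 1 → ∀ M : ℕ, (bp^M) (R vac) = fp ((bp^(M+1)) vac) := by
    intro hp1 M
    have hp1c : (p:ℂ) = 1 := by rw [hp1]; norm_num
    induction M using Nat.strong_induction_on with
    | _ M SIH =>
      -- bp ∘ fp on bosonic towers, using the induction hypothesis
      have hbpfp : ∀ j : ℕ, j < M → bp (fp ((bp^j) vac)) = fp ((bp^(j+1)) vac) := by
        intro j hj
        rw [pbpfp, Gbp R pRbp, SIH j hj, hgp, ← hshift]
        module
      -- bm on pure bosonic towers (order 1)
      have Lbm_pb : ∀ k : ℕ, bm ((bp^k) (bp vac)) = ((k:ℂ)+1) • ((bp^k) vac) := by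
        intro k
        induction k with
        | zero => simp [hbb, hp1c]
        | succ n ih =>
          rw [hps, pbmbp, ih, ← hshift bp n vac, LBgen (n+1) vac (p:ℂ) vB0, map_smul, ← hps, hp1c]
          push_cast
          module
      -- C0 on bosonic towers
      have Ccl : ∀ j : ℕ, j ≤ M → C0 ((bp^j) (bp vac)) = (2*(j:ℂ)+2) • (fp ((bp^j) vac)) := by
        intro j
        induction j with
        | zero =>
          intro _
          simp only [pow_zero, Module.End.one_apply]
          rw [pCbp, vC0, map_zero, zero_add]
          module
        | succ n ih =>
          intro hn
          have hn' : n ≤ M := by omega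
          have hnM : n < M := by omega
          rw [hps, pCbp, ih hn', map_smul, hbpfp n hnM, ← hshift]
          push_cast
          module
      -- bm on the alpha vectors with one fp
      have hbmA : ∀ j : ℕ, j ≤ M → bm (fp ((bp^(j+1)) vac)) = ((j:ℂ)+1) • (fp ((bp^j) vac)) := by
        intro j hj
        rw [hshift, pbmfp, Ccl j hj, Lbm_pb j, map_smul]
        module
      -- bm on the beta vectors
      have hbmB : bm ((bp^M) (R vac)) = ((M:ℂ)+1) • (fp ((bp^M) vac)) := by
        cases M with
        | zero => simpa using vbmR
        | succ K =>
          have hK : K < K + 1 := Nat.lt_succ_self K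
          have hK' : K ≤ K + 1 := Nat.le_succ K
          rw [hps, pbmbp, LBgen K (R vac) ((p:ℂ)+2) vBR, SIH K hK]
          rw [hbmA K hK', map_smul, hbpfp K hK, hp1c]
          push_cast
          module
      -- fm kills w
      have hfmw : fm ((bp^M) (R vac) - fp ((bp^(M+1)) vac)) = 0 := by
        rw [map_sub, L9, pfmfp, L2 (M+1), map_zero, zero_add,
          Gbp F0 pFbp, vF0, map_smul, hp1c, one_smul, ← hshift, sub_self]
      -- bm kills w
      have hbmw : bm ((bp^M) (R vac) - fp ((bp^(M+1)) vac)) = 0 := by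
        rw [map_sub, hbmB, hbmA M (le_refl M), sub_self]
      -- inner product argument
      have hw : ((bp^M) (R vac) - fp ((bp^(M+1)) vac)) = 0 := by
        rw [← inner_self_eq_zero (𝕜 := ℂ)]
        rw [inner_sub_left]
        have e1 : (inner ℂ (fp ((bp^(M+1)) vac)) ((bp^M) (R vac) - fp ((bp^(M+1)) vac)) : ℂ)
            = 0 := by
          rw [hadjf', hfmw, inner_zero_right]
        have e2 : (inner ℂ ((bp^M) (R vac)) ((bp^M) (R vac) - fp ((bp^(M+1)) vac)) : ℂ)
            = 0 := by
          rw [adjpow bp bm hadjb' M]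
          cases M with
          | zero =>
            simp only [pow_zero, Module.End.one_apply]
            have hb' := hbmw; have hf' := hfmw
            simp only [pow_zero, Module.End.one_apply] at hb' hf'
            have hRv : R vac = (2:ℂ)⁻¹ • (bp (fp vac) + fp (bp vac)) := by
              rw [hR, Rplus]; simp [Module.End.mul_apply]
            have hz : ∀ y : V, bm y = 0 → fm y = 0 → (inner ℂ (R vac) y : ℂ) = 0 := by
              intro y hby hfy
              rw [hRv, inner_smul_left, inner_add_left, hadjf', hadjb', hby, hfy,
                inner_zero_right, inner_zero_right]
              ring
            exact hz _ hb' hf' 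
          | succ K =>
            rw [hshift bm K, hbmw, map_zero, inner_zero_right]
        rw [e1, e2, sub_zero]
      exact sub_eq_zero.mp hw
  -- setup for the general case
  obtain ⟨M, hM⟩ : ∃ M, m = M + 1 := ⟨m - 1, (Nat.succ_pred_eq_of_pos hm).symm⟩
  obtain ⟨P, hP⟩ : ∃ P, p = P + 1 := ⟨p - 1, (Nat.succ_pred_eq_of_pos hp).symm⟩
  have p0 : ((p:ℂ)) ≠ 0 := Nat.cast_ne_zero.mpr hp.ne'
  have hvB : vB bp fp vac m p = (fp^P) ((bp^M) (R vac)) := by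
    rw [vB, if_neg (by simp [hM, hP])]
    simp only [hM, hP, Nat.add_sub_cancel, Module.End.mul_apply, ← hR]
  have hvA : vA bp fp vac m p = (fp^(P+1)) ((bp^(M+1)) vac) := by
    rw [vA]; simp only [hM, hP, Module.End.mul_apply]
  rw [hvB, hvA]
  rcases P with _ | Q
  · -- p = 1
    have hp1 : p = 1 := by omega
    have hp1c : (p:ℂ) = 1 := by rw [hp1]; norm_num
    simp only [pow_zero, pow_one, Module.End.one_apply, hp1c, inv_one, one_smul]
    rw [key1 hp1 M, hps]
    simp
  · -- p ≥ 2
    have hpc : (p:ℂ) = (Q:ℂ) + 2 := by rw [hP]; push_cast; ring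
    have hFbM : F0 ((bp^(M+1)) vac) = (p:ℂ) • ((bp^(M+1)) vac) := by
      rw [Gbp F0 pFbp, vF0, map_smul]
    have hFbR : F0 ((bp^M) (R vac)) = ((p:ℂ) - 2) • ((bp^M) (R vac)) := by
      rw [Gbp F0 pFbp, vFR, map_smul]
    have hfmA : fm ((fp^(Q+1+1)) ((bp^(M+1)) vac))
        = (p:ℂ) • ((fp^(Q+1)) ((bp^(M+1)) vac)) := by
      rw [L5 (Q+1) ((bp^(M+1)) vac) 0 (p:ℂ) (L2 (M+1)) hFbM, map_zero, zero_add]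
      congr 1
      rw [hpc]; push_cast; ring
    have hfmB : fm ((fp^(Q+1)) ((bp^M) (R vac))) = (fp^(Q+1)) ((bp^(M+1)) vac) := by
      rw [L5 Q ((bp^M) (R vac)) ((bp^M) (bp vac)) ((p:ℂ) - 2) (L9 M) hFbR]
      have hz : ((Q:ℂ)+1) * (((p:ℂ) - 2) - (Q:ℂ)) = 0 := by
        rw [hpc]; ring
      rw [hz, zero_smul, add_zero, ← hshift]
    have hfmw : fm ((p:ℂ) • ((fp^(Q+1)) ((bp^M) (R vac)))
        - (fp^(Q+1+1)) ((bp^(M+1)) vac)) = 0 := by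
      rw [map_sub, map_smul, hfmA, hfmB, sub_self]
    have hw : ((p:ℂ) • ((fp^(Q+1)) ((bp^M) (R vac)))
        - (fp^(Q+1+1)) ((bp^(M+1)) vac)) = 0 := by
      rw [← inner_self_eq_zero (𝕜 := ℂ)]
      set w := (p:ℂ) • ((fp^(Q+1)) ((bp^M) (R vac))) - (fp^(Q+1+1)) ((bp^(M+1)) vac) with hwdef
      have hfw1 : (fm^(Q+1)) w = 0 := by
        rw [hshift fm Q, hfmw, map_zero]
      have e1 : (inner ℂ ((fp^(Q+1)) ((bp^M) (R vac))) w : ℂ) = 0 := by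
        rw [adjpow fp fm hadjf' (Q+1), hfw1, inner_zero_right]
      have e2 : (inner ℂ ((fp^(Q+1+1)) ((bp^(M+1)) vac)) w : ℂ) = 0 := by
        rw [adjpow fp fm hadjf' (Q+1+1), hshift fm (Q+1), hfmw, map_zero, inner_zero_right]
      rw [hwdef, inner_sub_left, inner_smul_left, ← hwdef, e1, e2, mul_zero, sub_zero]
    have h0 : (p:ℂ) • ((fp^(Q+1)) ((bp^M) (R vac))) = (fp^(Q+1+1)) ((bp^(M+1)) vac) :=
      sub_eq_zero.mp hw
    rw [← h0, smul_smul, inv_mul_cancel₀ p0, one_smul]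
end
end

section
/- Under the Fock-vacuum assumptions, assume additionally that: (i) |0⟩ ≠ 0; (ii) the family of vectors {|m,n,α⟩ : m ≥ 0, 0 ≤ n ≤ p} ∪ {|m,n,β⟩ : m ≥ 1, 1 ≤ n ≤ p-1} is linearly independent over ℂ and spans V; (iii) |m,p,β⟩ = (1/p)|m,p,α⟩ for all m ≥ 1; and (iv) (f⁺)^(p+1)(b⁺)ᵐ|0⟩ = 0 for all m ≥ 0. Then V is a simple module over P_BF^(1,1): the only ℂ-subspaces of V invariant under all four operators b⁺, b⁻, f⁺, f⁻ are {0} and V. -/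
noncomputable section

/-- Index type for the basis family of the Fock space: `α`-type vectors
`|m,n,α⟩` with `m ≥ 0`, `0 ≤ n ≤ p` and `β`-type vectors `|m,n,β⟩` with
`m ≥ 1`, `1 ≤ n ≤ p - 1`. -/
def FockIdx (p : ℕ) : Type :=
  {q : ℕ × ℕ // q.2 ≤ p} ⊕ {q : ℕ × ℕ // 1 ≤ q.1 ∧ 1 ≤ q.2 ∧ q.2 ≤ p - 1}

/-- The family of basis vectors of the Fock space. -/
def fockFam {V : Type*} [AddCommGroup V] [Module ℂ V] (p : ℕ)
    (bp fp : Module.End ℂ V) (vac : V) : FockIdx p → V :=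
  Sum.elim (fun q => vA bp fp vac q.1.1 q.1.2) (fun q => vB bp fp vac q.1.1 q.1.2)

/-! ### Auxiliary material -/

/-- coefficient `a_m` -/
def pbcA (m : ℕ) : ℂ := if Even m then 0 else 2

/-- coefficient `c_m` -/
def pbcC (m : ℕ) : ℂ := if Even m then 2*m else 2*m - 2

/-- coefficient `μ_m` -/
def pbcM (p m : ℕ) : ℂ := if Even m then m else m + p - 1

lemma pbcA_zero : pbcA 0 = 0 := by simp [pbcA]

lemma pbcA_one : pbcA 1 = 2 := by simp [pbcA]

lemma pbcA_succ (m : ℕ) : pbcA (m+1) = 2 - pbcA m := by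
  rcases Nat.even_or_odd m with h | h
  · simp [pbcA, h, Nat.even_add_one, Nat.not_even_iff_odd]
  · simp [pbcA, Nat.even_add_one, Nat.not_even_iff_odd.mpr h, h]

lemma pbcC_zero : pbcC 0 = 0 := by simp [pbcC]

lemma pbcC_one : pbcC 1 = 0 := by norm_num [pbcC]

lemma pbcC_succ (m : ℕ) : pbcC (m+1) = 2 * pbcA m + pbcC m := by
  rcases Nat.even_or_odd m with h | h
  · simp [pbcC, pbcA, h, Nat.even_add_one, Nat.not_even_iff_odd]
    push_cast
    ring
  · simp [pbcC, pbcA, Nat.even_add_one, Nat.not_even_iff_odd.mpr h, h]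
    push_cast
    ring

lemma pbcM_zero (p : ℕ) : pbcM p 0 = 0 := by simp [pbcM]

lemma pbcM_one (p : ℕ) : pbcM p 1 = (p : ℂ) := by norm_num [pbcM]

lemma pbcM_succ (p m : ℕ) : pbcM p (m+1) = (p:ℂ) + 2*m - pbcM p m := by
  rcases Nat.even_or_odd m with h | h
  · simp [pbcM, h, Nat.even_add_one, Nat.not_even_iff_odd]
    push_cast
    ring
  · simp [pbcM, Nat.even_add_one, Nat.not_even_iff_odd.mpr h, h]
    push_cast
    ring

lemma pbcM_ne (p m : ℕ) (hp : 0 < p) : pbcM p (m+1) ≠ 0 := by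
  rcases Nat.even_or_odd (m+1) with h | h
  · have : pbcM p (m+1) = ((m+1 : ℕ) : ℂ) := by simp [pbcM, h]
    rw [this]
    exact_mod_cast Nat.succ_ne_zero m
  · have : pbcM p (m+1) = ((m + p : ℕ) : ℂ) := by
      simp [pbcM, Nat.not_even_iff_odd.mpr h]
      push_cast
      ring
    rw [this]
    exact_mod_cast (Nat.add_pos_right m hp).ne'

lemma pbcStuck_ne (p m : ℕ) (hp : 2 ≤ p) : pbcA (m+1) - pbcM p (m+1) - (p:ℂ) ≠ 0 := by
  rcases Nat.even_or_odd (m+1) with h | h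
  · have e : pbcA (m+1) - pbcM p (m+1) - (p:ℂ) = -(((m+1+p : ℕ) : ℂ)) := by
      simp [pbcA, pbcM, h, Nat.not_even_iff_odd]
      push_cast
      ring
    rw [e, neg_ne_zero]
    have : m + 1 + p ≠ 0 := by omega
    exact_mod_cast this
  · have e : pbcA (m+1) - pbcM p (m+1) - (p:ℂ) = 2 - ((m + 2*p : ℕ) : ℂ) := by
      simp [pbcA, pbcM, Nat.not_even_iff_odd.mpr h, h]
      push_cast
      ring
    rw [e, sub_ne_zero]
    intro h2
    have : (m + 2*p : ℕ) = 2 := by exact_mod_cast h2.symm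
    omega

theorem proj_lemma' {V : Type*} [AddCommGroup V] [Module ℂ V] (W : Submodule ℂ V)
    (T : Module.End ℂ V) (hT : ∀ v ∈ W, T v ∈ W) {ι : Type*} [DecidableEq ι]
    (e : ι → V) (lam : ι → ℂ)
    (heig : ∀ i, T (e i) = lam i • e i) (s : Finset ι) :
    ∀ c : ι → ℂ, (∑ i ∈ s, c i • e i) ∈ W → ∀ μ : ℂ,
      (∑ i ∈ s.filter (fun i => lam i = μ), c i • e i) ∈ W := by
  induction s using Finset.strongInduction with
  | _ s ih =>
    intro c hc μ
    by_cases hex : ∀ i ∈ s, lam i = μ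
    · rw [Finset.filter_true_of_mem hex]; exact hc
    · push_neg at hex; obtain ⟨j, hj, hjne⟩ := hex
      have h1 : (∑ i ∈ s.erase j, ((lam i - lam j) * c i) • e i) ∈ W := by
        have h2 : T (∑ i ∈ s, c i • e i) - lam j • (∑ i ∈ s, c i • e i) ∈ W :=
          sub_mem (hT _ hc) (Submodule.smul_mem _ _ hc)
        have h3 : T (∑ i ∈ s, c i • e i) - lam j • (∑ i ∈ s, c i • e i)
            = ∑ i ∈ s.erase j, ((lam i - lam j) * c i) • e i := by
          rw [map_sum, Finset.smul_sum]
          rw [Finset.sum_erase_eq_sub hj]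
          have : ∀ i ∈ s, T (c i • e i) = (lam i * c i) • e i := by
            intro i _
            rw [map_smul, heig i, smul_smul, mul_comm]
          rw [Finset.sum_congr rfl this]
          rw [show ((lam j - lam j) * c j) • e j = 0 by simp]
          rw [sub_zero, ← Finset.sum_sub_distrib]
          congr 1; ext i
          rw [smul_smul, ← sub_smul]; ring_nf
        rw [h3] at h2; exact h2
      have h4 := ih (s.erase j) (Finset.erase_ssubset hj) _ h1 μ
      have h5 : (s.erase j).filter (fun i => lam i = μ) = s.filter (fun i => lam i = μ) := by
        ext i
        simp only [Finset.mem_filter, Finset.mem_erase]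
        constructor
        · rintro ⟨⟨_, hi⟩, hl⟩; exact ⟨hi, hl⟩
        · rintro ⟨hi, hl⟩; exact ⟨⟨fun h => hjne (h ▸ hl), hi⟩, hl⟩
      rw [h5] at h4
      have h6 : ∑ i ∈ s.filter (fun i => lam i = μ), ((lam i - lam j) * c i) • e i
          = (μ - lam j) • ∑ i ∈ s.filter (fun i => lam i = μ), c i • e i := by
        rw [Finset.smul_sum]
        apply Finset.sum_congr rfl
        intro i hi
        rw [Finset.mem_filter] at hi
        rw [hi.2, smul_smul]
      rw [h6] at h4
      have h7 : (μ - lam j) ≠ 0 := sub_ne_zero.mpr (Ne.symm hjne)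
      have := Submodule.smul_mem W (μ - lam j)⁻¹ h4
      rwa [inv_smul_smul₀ h7] at this

theorem fock_space_simple_module {V : Type*} [AddCommGroup V] [Module ℂ V]
    (p : ℕ) (hp : 0 < p)
    (bp bm fp fm : Module.End ℂ V) (hrel : PBFRels bp bm fp fm)
    (vac : V) (hb0 : bm vac = 0) (hf0 : fm vac = 0)
    (hbb : bm (bp vac) = (p : ℂ) • vac) (hff : fm (fp vac) = (p : ℂ) • vac)
    (hbf : bm (fp vac) = 0) (hfb : fm (bp vac) = 0)
    (hvac : vac ≠ 0)
    (hli : LinearIndependent ℂ (fockFam p bp fp vac))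
    (hspan : ⊤ ≤ Submodule.span ℂ (Set.range (fockFam p bp fp vac)))
    (hbeta : ∀ m : ℕ, 1 ≤ m →
      vB bp fp vac m p = ((p : ℂ))⁻¹ • vA bp fp vac m p)
    (hcut : ∀ m : ℕ, vA bp fp vac m (p + 1) = 0) :
    ∀ W : Submodule ℂ V,
      (∀ v ∈ W, bp v ∈ W) → (∀ v ∈ W, bm v ∈ W) →
      (∀ v ∈ W, fp v ∈ W) → (∀ v ∈ W, fm v ∈ W) →
      W = ⊥ ∨ W = ⊤ := by
  classical
  obtain ⟨r1,r2,r3,r4,r5,r6,r7,r8,r9,r10,r11,r12,r13,r14,r15,r16,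
    r17,r18,r19,r20,r21,r22,r23,r24,r25,r26,r27,r28,r29,r30,r31,r32⟩ := hrel
  set R : Module.End ℂ V := Rplus bp fp with hR
  set X : ℕ → ℕ → V := vA bp fp vac with hXdef
  set Y : ℕ → ℕ → V := vB bp fp vac with hYdef
  -- ## structural lemmas
  have hX00 : X 0 0 = vac := by simp [hXdef, vA]
  have hXsucc : ∀ m n, X m (n+1) = fp (X m n) := by
    intro m n
    simp [hXdef, vA, pow_succ', Module.End.mul_apply]
  have hXb : ∀ m, X (m+1) 0 = bp (X m 0) := by
    intro m
    simp [hXdef, vA, pow_succ', Module.End.mul_apply]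
  have hY0 : ∀ m, Y m 0 = 0 := by intro m; simp [hYdef, vB]
  have hY0' : ∀ n, Y 0 n = 0 := by intro n; simp [hYdef, vB]
  have hY11 : Y 1 1 = R vac := by simp [hYdef, vB, hR]
  have hYb : ∀ m, Y (m+2) 1 = bp (Y (m+1) 1) := by
    intro m
    simp [hYdef, vB, hR, pow_succ', Module.End.mul_apply]
  have fpY : ∀ m n, fp (Y m (n+1)) = Y m (n+2) := by
    intro m n
    rcases m with _ | m
    · simp [hY0']
    · simp [hYdef, vB, hR, pow_succ', Module.End.mul_apply]
  have fpYsmul : ∀ (m : ℕ) (n : ℕ) (c : ℂ), fp ((c * (n:ℂ)) • Y m n) = (c * (n:ℂ)) • Y m (n+1) := by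
    intro m n c
    rcases n with _ | n
    · simp
    · rw [map_smul, fpY]
  have fpYsmul' : ∀ (m : ℕ) (n : ℕ) (c : ℂ), fp (((n:ℂ) * c) • Y m n) = ((n:ℂ) * c) • Y m (n+1) := by
    intro m n c
    rcases n with _ | n
    · simp
    · rw [map_smul, fpY]
  -- ## operator identities
  have hRapp : ∀ v : V, R v = (2:ℂ)⁻¹ • (bp (fp v) + fp (bp v)) := by
    intro v
    simp [hR, Rplus, Module.End.mul_apply]
  have hRbp : ∀ v : V, R (bp v) = bp (R v) := by
    intro v
    have h := DFunLike.congr_fun r11 v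
    simp only [pbComm, pbAcomm, LinearMap.sub_apply, LinearMap.add_apply,
      Module.End.mul_apply, LinearMap.zero_apply, map_add] at h
    rw [hRapp (bp v), hRapp v, map_smul, map_add]
    linear_combination (norm := module) ((2:ℂ)⁻¹) • h
  have hRfp : ∀ v : V, R (fp v) = -(fp (R v)) := by
    intro v
    have h := DFunLike.congr_fun r19 v
    simp only [pbComm, pbAcomm, LinearMap.sub_apply, LinearMap.add_apply,
      Module.End.mul_apply, LinearMap.zero_apply, map_add] at h
    have h2 : bp (fp (fp v)) + fp (bp (fp v)) = -(fp (bp (fp v)) + fp (fp (bp v))) := by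
      linear_combination (norm := module) h
    rw [hRapp (fp v), hRapp v, map_smul, map_add, h2, smul_neg]
  have hbpfp : ∀ v : V, bp (fp v) = (2:ℂ) • R v - fp (bp v) := by
    intro v
    have h := hRapp v
    linear_combination (norm := module) (-2:ℂ) • h
  have hRR : ∀ v : V, R (R v) = 0 := by
    intro v
    have s1 : bp (fp (R v)) = -(bp (R (fp v))) := by rw [hRfp v]; simp
    have s2 : fp (bp (R v)) = fp (R (bp v)) := by rw [hRbp v]
    have s3 : bp (R (fp v)) = R (bp (fp v)) := (hRbp (fp v)).symm
    have s4 : fp (R (bp v)) = -(R (fp (bp v))) := by rw [hRfp (bp v)]; simp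
    have h1 : R (R v) = -(R (R v)) := by
      conv_lhs => rw [hRapp (R v), s1, s2, s3, s4]
      conv_rhs => rw [hRapp v]
      rw [map_smul, map_add]
      module
    have h2 : (2:ℂ) • R (R v) = 0 := by
      rw [two_smul]; nth_rewrite 2 [h1]; simp
    simpa using (smul_eq_zero.mp h2).resolve_left (by norm_num)
  set K : Module.End ℂ V := fp * fm - fm * fp with hKdef
  set T : Module.End ℂ V := fm * bp + bp * fm with hTdef
  set U : Module.End ℂ V := bm * fp + fp * bm with hUdef
  set L : Module.End ℂ V := bp * bm + bm * bp with hLdef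
  have hKapp : ∀ v : V, K v = fp (fm v) - fm (fp v) := by
    intro v; simp [hKdef, Module.End.mul_apply]
  have hTapp : ∀ v : V, T v = fm (bp v) + bp (fm v) := by
    intro v; simp [hTdef, Module.End.mul_apply]
  have hUapp : ∀ v : V, U v = bm (fp v) + fp (bm v) := by
    intro v; simp [hUdef, Module.End.mul_apply]
  have hLapp : ∀ v : V, L v = bp (bm v) + bm (bp v) := by
    intro v; simp [hLdef, Module.End.mul_apply]
  have hfmfp : ∀ v : V, fm (fp v) = fp (fm v) - K v := by
    intro v; rw [hKapp]; abel
  have hfmbp : ∀ v : V, fm (bp v) = T v - bp (fm v) := by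
    intro v; rw [hTapp]; abel
  have hbmfp : ∀ v : V, bm (fp v) = U v - fp (bm v) := by
    intro v; rw [hUapp]; abel
  have hbmbp : ∀ v : V, bm (bp v) = L v - bp (bm v) := by
    intro v; rw [hLapp]; abel
  have hKfp : ∀ v : V, K (fp v) = fp (K v) + (2:ℂ) • fp v := by
    intro v
    have h := DFunLike.congr_fun r32 v
    simp only [pbComm, pbAcomm, LinearMap.sub_apply, LinearMap.add_apply,
      Module.End.mul_apply, LinearMap.zero_apply, Module.End.ofNat_apply, two_smul,
      map_sub, map_add] at h
    rw [hKapp (fp v), hKapp v, map_sub]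
    linear_combination (norm := module) h
  have hKbp : ∀ v : V, K (bp v) = bp (K v) := by
    intro v
    have h := DFunLike.congr_fun r18 v
    simp only [pbComm, pbAcomm, LinearMap.sub_apply, LinearMap.add_apply,
      Module.End.mul_apply, LinearMap.zero_apply, map_sub, map_add] at h
    rw [hKapp (bp v), hKapp v, map_sub]
    linear_combination (norm := module) (-1:ℂ) • h
  have hTbp : ∀ v : V, T (bp v) = bp (T v) := by
    intro v
    have h := DFunLike.congr_fun r8 v
    simp only [pbComm, pbAcomm, LinearMap.sub_apply, LinearMap.add_apply,
      Module.End.mul_apply, LinearMap.zero_apply, map_sub, map_add] at h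
    rw [hTapp (bp v), hTapp v, map_add]
    linear_combination (norm := module) h
  have hTfp : ∀ v : V, T (fp v) = (2:ℂ) • bp v - fp (T v) := by
    intro v
    have h := DFunLike.congr_fun r23 v
    simp only [pbComm, pbAcomm, LinearMap.sub_apply, LinearMap.add_apply,
      Module.End.mul_apply, LinearMap.zero_apply, Module.End.ofNat_apply, two_smul,
      map_sub, map_add] at h
    rw [hTapp (fp v), hTapp v, map_add]
    linear_combination (norm := module) h
  have hUbp : ∀ v : V, U (bp v) = bp (U v) + (2:ℂ) • fp v := by
    intro v
    have h := DFunLike.congr_fun r21 v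
    simp only [pbComm, pbAcomm, LinearMap.sub_apply, LinearMap.add_apply,
      Module.End.mul_apply, LinearMap.zero_apply, Module.End.ofNat_apply, two_smul,
      map_sub, map_add] at h
    rw [hUapp (bp v), hUapp v, map_add]
    linear_combination (norm := module) h
  have hUfp : ∀ v : V, U (fp v) = -(fp (U v)) := by
    intro v
    have h := DFunLike.congr_fun r16 v
    simp only [pbComm, pbAcomm, LinearMap.sub_apply, LinearMap.add_apply,
      Module.End.mul_apply, LinearMap.zero_apply, map_sub, map_add] at h
    rw [hUapp (fp v), hUapp v, map_add]
    linear_combination (norm := module) h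
  have hLbp : ∀ v : V, L (bp v) = bp (L v) + (2:ℂ) • bp v := by
    intro v
    have h := DFunLike.congr_fun r31 v
    simp only [pbComm, pbAcomm, LinearMap.sub_apply, LinearMap.add_apply,
      Module.End.mul_apply, LinearMap.zero_apply, LinearMap.neg_apply,
      Module.End.ofNat_apply, two_smul, map_sub, map_add] at h
    rw [hLapp (bp v), hLapp v, map_add]
    linear_combination (norm := module) (-1:ℂ) • h
  have hLfp : ∀ v : V, L (fp v) = fp (L v) := by
    intro v
    have h := DFunLike.congr_fun r17 v
    simp only [pbComm, pbAcomm, LinearMap.sub_apply, LinearMap.add_apply,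
      Module.End.mul_apply, LinearMap.zero_apply, map_sub, map_add] at h
    rw [hLapp (fp v), hLapp v, map_add]
    linear_combination (norm := module) h
  have hKvac : K vac = -((p:ℂ) • vac) := by
    rw [hKapp, hf0, hff, map_zero]; abel
  have hTvac : T vac = 0 := by rw [hTapp, hf0, hfb, map_zero]; abel
  have hUvac : U vac = 0 := by rw [hUapp, hb0, hbf, map_zero]; abel
  have hLvac : L vac = (p:ℂ) • vac := by rw [hLapp, hb0, hbb, map_zero]; abel
  have hKR : ∀ v : V, K (R v) = R (K v) + (2:ℂ) • R v := by
    intro v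
    have e1 : K (bp (fp v)) = bp (fp (K v)) + (2:ℂ) • bp (fp v) := by
      rw [hKbp (fp v), hKfp v, map_add, map_smul]
    have e2 : K (fp (bp v)) = fp (bp (K v)) + (2:ℂ) • fp (bp v) := by
      rw [hKfp (bp v), hKbp v]
    have e0 : K (R v) = (2:ℂ)⁻¹ • (K (bp (fp v)) + K (fp (bp v))) := by
      rw [hRapp v, map_smul, map_add]
    rw [e0, e1, e2, hRapp (K v), hRapp v]
    module
  have hLR : ∀ v : V, L (R v) = R (L v) + (2:ℂ) • R v := by
    intro v
    have e1 : L (bp (fp v)) = bp (fp (L v)) + (2:ℂ) • bp (fp v) := by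
      rw [hLbp (fp v), hLfp v]
    have e2 : L (fp (bp v)) = fp (bp (L v)) + (2:ℂ) • fp (bp v) := by
      rw [hLfp (bp v), hLbp v, map_add, map_smul]
    have e0 : L (R v) = (2:ℂ)⁻¹ • (L (bp (fp v)) + L (fp (bp v))) := by
      rw [hRapp v, map_smul, map_add]
    rw [e0, e1, e2, hRapp (L v), hRapp v]
    module
  -- ## eigenvalue lemmas
  have hKX0 : ∀ m, K (X m 0) = -((p:ℂ) • X m 0) := by
    intro m
    induction m with
    | zero => rw [hX00]; exact hKvac
    | succ m ih => rw [hXb m, hKbp, ih, map_neg, map_smul]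
  have hKX : ∀ m n, K (X m n) = ((2*(n:ℂ)) - p) • X m n := by
    intro m n
    induction n with
    | zero => rw [hKX0]; push_cast; module
    | succ n ih =>
      rw [hXsucc m n, hKfp, ih, map_smul]
      push_cast
      module
  have hKY1 : ∀ m, K (Y (m+1) 1) = ((2:ℂ) - p) • Y (m+1) 1 := by
    intro m
    induction m with
    | zero =>
      rw [hY11, hKR vac, hKvac, map_neg, map_smul]
      module
    | succ m ih => rw [hYb m, hKbp, ih, map_smul]
  have hKY : ∀ m n, K (Y (m+1) (n+1)) = ((2*((n:ℂ)+1)) - p) • Y (m+1) (n+1) := by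
    intro m n
    induction n with
    | zero => rw [hKY1]; push_cast; module
    | succ n ih =>
      rw [← fpY (m+1) n, hKfp, ih, map_smul]
      push_cast
      module
  have hLX0 : ∀ m, L (X m 0) = ((2*(m:ℂ)) + p) • X m 0 := by
    intro m
    induction m with
    | zero => rw [hX00, hLvac]; push_cast; module
    | succ m ih =>
      rw [hXb m, hLbp, ih, map_smul]
      push_cast
      module
  have hLX : ∀ m n, L (X m n) = ((2*(m:ℂ)) + p) • X m n := by
    intro m n
    induction n with
    | zero => exact hLX0 m
    | succ n ih => rw [hXsucc m n, hLfp, ih, map_smul]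
  have hLY1 : ∀ m, L (Y (m+1) 1) = ((2*((m:ℂ)+1)) + p) • Y (m+1) 1 := by
    intro m
    induction m with
    | zero =>
      rw [hY11, hLR vac, hLvac, map_smul]
      push_cast
      module
    | succ m ih =>
      rw [hYb m, hLbp, ih, map_smul]
      push_cast
      module
  have hLY : ∀ m n, L (Y (m+1) (n+1)) = ((2*((m:ℂ)+1)) + p) • Y (m+1) (n+1) := by
    intro m n
    induction n with
    | zero => exact hLY1 m
    | succ n ih => rw [← fpY (m+1) n, hLfp, ih, map_smul]
  -- ## R action
  have hRX0 : ∀ m, R (X m 0) = Y (m+1) 1 := by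
    intro m
    induction m with
    | zero => rw [hX00, hY11]
    | succ m ih => rw [hXb m, hRbp, ih, ← hYb]
  have hRX : ∀ m n, R (X m n) = ((-1:ℂ)^n) • Y (m+1) (n+1) := by
    intro m n
    induction n with
    | zero => rw [hRX0]; simp
    | succ n ih =>
      rw [hXsucc m n, hRfp, ih, map_smul, fpY (m+1) n, pow_succ]
      module
  have hRY1 : ∀ m, R (Y (m+1) 1) = 0 := by
    intro m
    induction m with
    | zero => rw [hY11]; exact hRR vac
    | succ m ih => rw [hYb m, hRbp, ih, map_zero]
  have hRY : ∀ m n, R (Y (m+1) (n+1)) = 0 := by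
    intro m n
    induction n with
    | zero => exact hRY1 m
    | succ n ih => rw [← fpY (m+1) n, hRfp, ih]; simp
  -- ## bp action
  have hbpX : ∀ m n, bp (X m n)
      = ((-1:ℂ)^n) • X (m+1) n + ((-1:ℂ)^n * (-2) * (n:ℂ)) • Y (m+1) n := by
    intro m n
    induction n with
    | zero => rw [hXb m]; simp [hY0]
    | succ n ih =>
      rw [hXsucc m n, hbpfp, hRX m n, ih, map_add, fpYsmul (m+1) n ((-1:ℂ)^n * (-2)),
        map_smul, ← hXsucc (m+1) n, pow_succ]
      push_cast
      module
  have hbpY : ∀ m n, bp (Y (m+1) (n+1)) = ((-1:ℂ)^n) • Y (m+2) (n+1) := by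
    intro m n
    induction n with
    | zero => rw [← hYb m]; simp
    | succ n ih =>
      rw [← fpY (m+1) n, hbpfp, hRY m n, ih, map_smul, fpY (m+2) n, pow_succ]
      module
  -- ## fm action
  have hTX0 : ∀ m, T (X m 0) = 0 := by
    intro m
    induction m with
    | zero => rw [hX00]; exact hTvac
    | succ m ih => rw [hXb m, hTbp, ih, map_zero]
  have hfmX0 : ∀ m, fm (X m 0) = 0 := by
    intro m
    induction m with
    | zero => rw [hX00]; exact hf0
    | succ m ih => rw [hXb m, hfmbp, hTX0, ih, map_zero]; simp
  have hfmX : ∀ m n, fm (X m (n+1)) = (((n:ℂ)+1) * ((p:ℂ) - n)) • X m n := by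
    intro m n
    induction n with
    | zero =>
      rw [hXsucc m 0, hfmfp, hfmX0, hKX m 0, map_zero]
      push_cast
      module
    | succ n ih =>
      rw [hXsucc m (n+1), hfmfp, ih, hKX m (n+1), map_smul, ← hXsucc m n]
      push_cast
      module
  have hTY1 : ∀ m, T (Y (m+1) 1) = (2:ℂ) • X (m+2) 0 := by
    intro m
    induction m with
    | zero =>
      have e1 : T (bp (fp vac)) = (2:ℂ) • bp (bp vac) := by
        rw [hTbp, hTfp, hTvac, map_zero, sub_zero, map_smul]
      have e2 : T (fp (bp vac)) = (2:ℂ) • bp (bp vac) - fp (T (bp vac)) := hTfp (bp vac)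
      have e3 : T (bp vac) = 0 := by rw [hTbp, hTvac, map_zero]
      have e4 : X 2 0 = bp (bp vac) := by rw [hXb 1, hXb 0, hX00]
      rw [hY11, hRapp vac, map_smul, map_add, e1, e2, e3, e4, map_zero]
      module
    | succ m ih =>
      rw [hYb m, hTbp, ih, map_smul, ← hXb (m+2)]
  have hfmY1 : ∀ m, fm (Y (m+1) 1) = X (m+1) 0 := by
    intro m
    induction m with
    | zero =>
      have e1 : fm (bp (fp vac)) = (2:ℂ) • bp vac - (p:ℂ) • bp vac := by
        rw [hfmbp, hTfp, hTvac, map_zero, sub_zero, hff, map_smul]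
      have e2 : fm (bp vac) = 0 := by rw [hfmbp, hTvac, hf0, map_zero, sub_zero]
      have e3 : fm (fp (bp vac)) = (p:ℂ) • bp vac := by
        rw [hfmfp, e2, hKbp, hKvac, map_zero, map_neg, map_smul]
        simp
      rw [hY11, hRapp vac, map_smul, map_add, e1, e3, hXb 0, hX00]
      module
    | succ m ih =>
      rw [hYb m, hfmbp, hTY1, ih, ← hXb (m+1)]
      module
  have hfmY : ∀ m n, fm (Y (m+1) (n+1))
      = X (m+1) n + ((n:ℂ) * ((p:ℂ) - ((n:ℂ)+1))) • Y (m+1) n := by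
    intro m n
    induction n with
    | zero => rw [hfmY1]; simp [hY0]
    | succ n ih =>
      rw [← fpY (m+1) n, hfmfp, ih, hKY m n, map_add,
        fpYsmul' (m+1) n ((p:ℂ) - ((n:ℂ)+1)), ← hXsucc (m+1) n]
      push_cast
      module
  -- ## U and bm action
  have hUX00 : ∀ n, U (X 0 n) = 0 := by
    intro n
    induction n with
    | zero => rw [hX00]; exact hUvac
    | succ n ih => rw [hXsucc 0 n, hUfp, ih]; simp
  have hUX0 : ∀ m, U (X (m+1) 0) = pbcA (m+1) • X m 1 + pbcC (m+1) • Y m 1 := by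
    intro m
    induction m with
    | zero =>
      rw [hXb 0, hUbp, hX00, hUvac, map_zero, pbcA_one, pbcC_one, hXsucc 0 0, hX00, hY0']
      module
    | succ m ih =>
      rw [hXb (m+1), hUbp, ih, map_add, map_smul, map_smul, hbpX m 1,
        ← hXsucc (m+1) 0, pbcA_succ (m+1), pbcC_succ (m+1)]
      rcases m with _ | k
      · rw [hY0' 1]
        simp only [map_zero, smul_zero]
        rw [pbcA_one, pbcC_one]
        norm_num
        module
      · rw [hbpY k 0]
        push_cast
        module
  have hUXn : ∀ m n, U (X (m+1) n)
      = ((-1:ℂ)^n * pbcA (m+1)) • X m (n+1) + ((-1:ℂ)^n * pbcC (m+1)) • Y m (n+1) := by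
    intro m n
    induction n with
    | zero => rw [hUX0 m]; norm_num
    | succ n ih =>
      rw [hXsucc (m+1) n, hUfp, ih, map_add, map_smul, map_smul, fpY m n,
        ← hXsucc m (n+1), pow_succ]
      module
  have hbmX0 : ∀ m, bm (X (m+1) 0) = pbcM p (m+1) • X m 0 := by
    intro m
    induction m with
    | zero => rw [hXb 0, hbmbp, hX00, hLvac, hb0, map_zero, sub_zero, pbcM_one]
    | succ m ih =>
      rw [hXb (m+1), hbmbp, hLX0 (m+1), ih, map_smul, ← hXb m, pbcM_succ p (m+1)]
      push_cast
      module
  have hbmX00 : ∀ n, bm (X 0 n) = 0 := by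
    intro n
    induction n with
    | zero => rw [hX00]; exact hb0
    | succ n ih => rw [hXsucc 0 n, hbmfp, hUX00, ih]; simp
  have hbmX : ∀ m n, bm (X (m+1) n)
      = ((-1:ℂ)^(n+1) * pbcA (m+1) * (n:ℂ) + (-1:ℂ)^n * pbcM p (m+1)) • X m n
        + ((-1:ℂ)^(n+1) * pbcC (m+1) * (n:ℂ)) • Y m n := by
    intro m n
    induction n with
    | zero =>
      rw [hbmX0 m]
      simp [hY0]
    | succ n ih =>
      rw [hXsucc (m+1) n, hbmfp, hUXn m n, ih, map_add, map_smul,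
        fpYsmul m n ((-1:ℂ)^(n+1) * pbcC (m+1)), ← hXsucc m n, pow_succ, pow_succ]
      push_cast
      module
  have hUY1 : ∀ m, U (Y (m+1) 1) = pbcA m • Y m 2 := by
    intro m
    induction m with
    | zero =>
      have e1 : U (bp (fp vac)) = (2:ℂ) • fp (fp vac) := by
        rw [hUbp, hUfp, hUvac, map_zero, neg_zero, map_zero]
        module
      have e2 : U (fp (bp vac)) = -((2:ℂ) • fp (fp vac)) := by
        rw [hUfp, hUbp, hUvac]
        rw [map_add, map_smul, map_zero, map_zero]
        module
      rw [hY11, hRapp vac, map_smul, map_add, e1, e2, pbcA_zero, hY0' 2]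
      module
    | succ m ih =>
      rw [hYb m, hUbp, ih, map_smul, fpY (m+1) 0, pbcA_succ m]
      rcases m with _ | k
      · rw [hY0' 2]
        simp only [map_zero, smul_zero, pbcA_zero]
        module
      · rw [hbpY k 1]
        push_cast
        module
  have hUYn : ∀ m n, U (Y (m+1) (n+1)) = ((-1:ℂ)^n * pbcA m) • Y m (n+2) := by
    intro m n
    induction n with
    | zero => rw [hUY1 m]; norm_num
    | succ n ih =>
      rw [← fpY (m+1) n, hUfp, ih, map_smul, fpY m (n+1), pow_succ]
      module
  have hbmY1 : ∀ m, bm (Y (m+1) 1) = X m 1 + pbcM p m • Y m 1 := by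
    intro m
    induction m with
    | zero =>
      have e1 : bm (bp (fp vac)) = (p:ℂ) • fp vac := by
        rw [hbmbp, hbf, map_zero, sub_zero, hLfp, hLvac, map_smul]
      have e2 : bm (fp (bp vac)) = (2:ℂ) • fp vac - (p:ℂ) • fp vac := by
        rw [hbmfp, hUbp, hUvac, map_zero, hbb, map_smul]
        module
      rw [hY11, hRapp vac, map_smul, map_add, e1, e2, hXsucc 0 0, hX00, pbcM_zero, hY0' 1]
      module
    | succ m ih =>
      rw [hYb m, hbmbp, hLY1 m, ih, map_add, map_smul, hbpX m 1]
      rcases m with _ | k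
      · rw [hY0' 1, pbcM_zero, pbcM_one]
        simp only [map_zero, smul_zero]
        push_cast
        module
      · rw [hbpY k 0, pbcM_succ p (k+1)]
        push_cast
        module
  have hbmY : ∀ m n, bm (Y (m+1) (n+1))
      = ((-1:ℂ)^n) • X m (n+1) + ((-1:ℂ)^n * (pbcM p m - pbcA m * (n:ℂ))) • Y m (n+1) := by
    intro m n
    induction n with
    | zero => rw [hbmY1 m]; push_cast; module
    | succ n ih =>
      rw [← fpY (m+1) n, hbmfp, hUYn m n, ih, map_add, map_smul, map_smul,
        fpY m n, ← hXsucc m (n+1), pow_succ]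
      push_cast
      module
  -- ## basis facts
  let Bb : Module.Basis (FockIdx p) ℂ V := Module.Basis.mk hli hspan
  have hBapp : ∀ i, Bb i = fockFam p bp fp vac i := fun i => Module.Basis.mk_apply hli hspan i
  have hBX : ∀ (m n : ℕ) (h : n ≤ p), Bb (Sum.inl ⟨(m,n), h⟩) = X m n := by
    intro m n h
    rw [hBapp (Sum.inl ⟨(m,n), h⟩)]
    simp [fockFam, hXdef]
  have hBY : ∀ (m n : ℕ) (h : 1 ≤ m ∧ 1 ≤ n ∧ n ≤ p - 1),
      Bb (Sum.inr ⟨(m,n), h⟩) = Y m n := by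
    intro m n h
    rw [hBapp (Sum.inr ⟨(m,n), h⟩)]
    simp [fockFam, hYdef]
  have hXne : ∀ m n, n ≤ p → X m n ≠ 0 := by
    intro m n h
    rw [← hBX m n h]
    exact Bb.ne_zero _
  have hXYind : ∀ m n, 1 ≤ m → 1 ≤ n → n ≤ p - 1 → ∀ α β : ℂ,
      α • X m n + β • Y m n = 0 → α = 0 ∧ β = 0 := by
    intro m n h1 h2 h3 α β heq
    have hnp : n ≤ p := le_trans h3 (Nat.sub_le p 1)
    have hij : (Sum.inl ⟨(m,n), hnp⟩ : FockIdx p) ≠ Sum.inr ⟨(m,n), ⟨h1, h2, h3⟩⟩ := by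
      simp
    have heq2 : α • Bb (Sum.inl ⟨(m,n), hnp⟩ : FockIdx p)
        + β • Bb (Sum.inr ⟨(m,n), ⟨h1, h2, h3⟩⟩ : FockIdx p) = 0 := by
      rw [hBX, hBY]; exact heq
    have key2 : ∀ i j : FockIdx p, i ≠ j → α • Bb i + β • Bb j = 0 → α = 0 ∧ β = 0 := by
      intro i j hij heq2
      constructor
      · have h0 := congrArg (fun w => Bb.repr w i) heq2
        simp only [map_add, map_smul, Module.Basis.repr_self, map_zero, Finsupp.add_apply,
          Finsupp.smul_apply, Finsupp.coe_zero, Pi.zero_apply] at h0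
        simpa [Finsupp.single_eq_of_ne, hij, hij.symm] using h0
      · have h0 := congrArg (fun w => Bb.repr w j) heq2
        simp only [map_add, map_smul, Module.Basis.repr_self, map_zero, Finsupp.add_apply,
          Finsupp.smul_apply, Finsupp.coe_zero, Pi.zero_apply] at h0
        simpa [Finsupp.single_eq_of_ne, hij, hij.symm] using h0
    exact key2 _ _ hij heq2
  -- ## main part
  intro W hWbp hWbm hWfp hWfm
  by_cases hWbot : W = ⊥
  · exact Or.inl hWbot
  refine Or.inr ?_
  have hWK : ∀ v ∈ W, K v ∈ W := by
    intro v hv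
    have h : K v = fp (fm v) - fm (fp v) := hKapp v
    rw [h]
    exact sub_mem (hWfp _ (hWfm _ hv)) (hWfm _ (hWfp _ hv))
  have hWL : ∀ v ∈ W, L v ∈ W := by
    intro v hv
    have h : L v = bp (bm v) + bm (bp v) := hLapp v
    rw [h]
    exact add_mem (hWbp _ (hWbm _ hv)) (hWbm _ (hWbp _ hv))
  -- ## descent: a nonzero single-level element of W forces vac ∈ W
  have key : ∀ n m (α β : ℂ), n ≤ p → (α • X m n + β • Y m n) ∈ W →
      α • X m n + β • Y m n ≠ 0 → vac ∈ W := by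
    intro n
    induction n with
    | zero =>
      have desc : ∀ m (γ : ℂ), γ ≠ 0 → γ • X m 0 ∈ W → vac ∈ W := by
        intro m
        induction m with
        | zero =>
          intro γ hγ hmem
          rw [hX00] at hmem
          have h2 := Submodule.smul_mem W γ⁻¹ hmem
          rwa [inv_smul_smul₀ hγ] at h2
        | succ m ihm =>
          intro γ hγ hmem
          have h2 := hWbm _ hmem
          rw [map_smul, hbmX0 m, smul_smul] at h2
          exact ihm _ (mul_ne_zero hγ (pbcM_ne p m hp)) h2
      intro m α β _ hmem hne
      rw [hY0, smul_zero, add_zero] at hmem hne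
      exact desc m α (fun h => hne (by rw [h, zero_smul])) hmem
    | succ n' ihn =>
      intro m
      induction m with
      | zero =>
        intro α β hnp hmem hne
        rw [hY0', smul_zero, add_zero] at hmem hne
        have hα : α ≠ 0 := fun h => hne (by rw [h, zero_smul])
        have h2 := hWfm _ hmem
        rw [map_smul, hfmX 0 n', smul_smul] at h2
        have hn'p : n' ≤ p := le_trans (Nat.le_succ n') hnp
        have hcoef : α * (((n':ℂ)+1) * ((p:ℂ) - n')) ≠ 0 := by
          apply mul_ne_zero hα
          apply mul_ne_zero (Nat.cast_add_one_ne_zero n')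
          rw [sub_ne_zero]
          intro h
          have h' : p = n' := by exact_mod_cast h
          omega
        apply ihn 0 (α * (((n':ℂ)+1) * ((p:ℂ) - n'))) 0 hn'p
        · rw [zero_smul, add_zero]; exact h2
        · rw [zero_smul, add_zero]
          exact smul_ne_zero hcoef (hXne 0 n' hn'p)
      | succ m'' ihm =>
        intro α β hnp hmem hne
        by_cases hcase : n' + 1 = p
        · -- top level n = p : use hbeta
          subst hcase
          have hm1 : 1 ≤ m''+1 := Nat.succ_le_succ (Nat.zero_le _)
          rw [hbeta (m''+1) hm1] at hmem hne
          have hcomb : α • X (m''+1) (n'+1) + β • (((n'+1 : ℕ):ℂ))⁻¹ • X (m''+1) (n'+1)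
              = (α + β * (((n'+1 : ℕ):ℂ))⁻¹) • X (m''+1) (n'+1) := by
            module
          rw [hcomb] at hmem hne
          have hγ : (α + β * (((n'+1 : ℕ):ℂ))⁻¹) ≠ 0 := fun h => hne (by rw [h, zero_smul])
          have h2 := hWfm _ hmem
          rw [map_smul, hfmX (m''+1) n', smul_smul] at h2
          have hone : (((n'+1:ℕ):ℂ)) - (n':ℂ) = 1 := by push_cast; ring
          have hcoef : (α + β * (((n'+1 : ℕ):ℂ))⁻¹) * (((n':ℂ)+1) * (((n'+1:ℕ):ℂ) - n')) ≠ 0 := by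
            apply mul_ne_zero hγ
            apply mul_ne_zero (Nat.cast_add_one_ne_zero n')
            rw [hone]
            norm_num
          apply ihn (m''+1)
            ((α + β * (((n'+1 : ℕ):ℂ))⁻¹) * (((n':ℂ)+1) * (((n'+1:ℕ):ℂ) - (n':ℂ)))) 0
            (Nat.le_succ n')
          · rw [zero_smul, add_zero]
            exact h2
          · rw [zero_smul, add_zero]
            exact smul_ne_zero hcoef (hXne (m''+1) n' (Nat.le_succ n'))
        · -- n' + 1 < p
          have hlt : n' + 1 < p := lt_of_le_of_ne hnp hcase
          have h2 := hWfm _ hmem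
          rw [map_add, map_smul, map_smul, hfmX (m''+1) n', hfmY m'' n'] at h2
          have h3 : (α * (((n':ℂ)+1) * ((p:ℂ) - n')) + β) • X (m''+1) n'
              + (β * ((n':ℂ) * ((p:ℂ) - ((n':ℂ)+1)))) • Y (m''+1) n' ∈ W := by
            have heq3 : α • ((((n':ℂ)+1) * ((p:ℂ) - n')) • X (m''+1) n')
                + β • (X (m''+1) n' + ((n':ℂ) * ((p:ℂ) - ((n':ℂ)+1))) • Y (m''+1) n')
                = (α * (((n':ℂ)+1) * ((p:ℂ) - n')) + β) • X (m''+1) n'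
                + (β * ((n':ℂ) * ((p:ℂ) - ((n':ℂ)+1)))) • Y (m''+1) n' := by
              module
            rwa [heq3] at h2
          by_cases hz : (α * (((n':ℂ)+1) * ((p:ℂ) - n')) + β) = 0
              ∧ (β * ((n':ℂ) * ((p:ℂ) - ((n':ℂ)+1)))) = 0
          · -- stuck case: forces n' = 0 and β = -αp; use bm to descend in m
            obtain ⟨hz1, hz2⟩ := hz
            have hcne : (((n':ℂ)+1) * ((p:ℂ) - n')) ≠ 0 := by
              apply mul_ne_zero (Nat.cast_add_one_ne_zero n')
              rw [sub_ne_zero]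
              intro h
              have h' : p = n' := by exact_mod_cast h
              omega
            have hα : α ≠ 0 := by
              intro h
              have hβ : β = 0 := by
                rw [h, zero_mul, zero_add] at hz1
                exact hz1
              exact hne (by rw [h, hβ, zero_smul, zero_smul, add_zero])
            have hβ : β ≠ 0 := by
              intro h
              rw [h, add_zero] at hz1
              exact mul_ne_zero hα hcne hz1
            have hpn1 : (p:ℂ) - ((n':ℂ)+1) ≠ 0 := by
              rw [sub_ne_zero]
              intro h
              apply hcase
              exact_mod_cast h.symm
            have hn0 : n' = 0 := by
              have h4 := (mul_eq_zero.mp hz2).resolve_left hβ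
              have h5 := (mul_eq_zero.mp h4).resolve_right hpn1
              exact_mod_cast h5
            subst hn0
            have hβval : β = -(α * (p:ℂ)) := by
              push_cast at hz1
              linear_combination hz1
            have hp2 : 2 ≤ p := by omega
            have h5 : (α * (pbcA (m''+1) - pbcM p (m''+1) - p)) • X m'' 1
                + (α * pbcC (m''+1) + β * pbcM p m'') • Y m'' 1 ∈ W := by
              have e : (α * (pbcA (m''+1) - pbcM p (m''+1) - p)) • X m'' 1
                  + (α * pbcC (m''+1) + β * pbcM p m'') • Y m'' 1
                  = bm (α • X (m''+1) 1 + β • Y (m''+1) 1) := by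
                rw [map_add, map_smul, map_smul, hbmX m'' 1, hbmY m'' 0, hβval]
                push_cast
                module
              rw [e]
              exact hWbm _ hmem
            have hα₂ : (α * (pbcA (m''+1) - pbcM p (m''+1) - p)) ≠ 0 :=
              mul_ne_zero hα (pbcStuck_ne p m'' hp2)
            apply ihm _ _ hnp h5
            rcases m'' with _ | k
            · rw [hY0', smul_zero, add_zero]
              exact smul_ne_zero hα₂ (hXne 0 1 (by omega))
            · intro h0
              obtain ⟨hA, _⟩ := hXYind (k+1) 1 (by omega) le_rfl (by omega) _ _ h0
              exact hα₂ hA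
          · -- some coefficient survives: descend in n
            apply ihn (m''+1) _ _ (le_of_lt (Nat.lt_of_succ_lt hlt)) h3
            rcases n' with _ | k
            · have hβ₁ : (β * (((0:ℕ):ℂ) * ((p:ℂ) - (((0:ℕ):ℂ)+1)))) = 0 := by
                push_cast
                ring
              push_cast at hβ₁ hz ⊢
              rw [hβ₁, zero_smul, add_zero]
              have hα₁ : ¬ (α * ((0+1) * ((p:ℂ) - 0)) + β) = 0 := by
                intro h
                exact hz ⟨h, hβ₁⟩
              exact smul_ne_zero hα₁ (hXne (m''+1) 0 (Nat.zero_le p))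
            · intro h0
              obtain ⟨hA, hB⟩ := hXYind (m''+1) (k+1) (by omega) (by omega) (by omega) _ _ h0
              exact hz ⟨hA, hB⟩
  -- ## stage 1: project a nonzero element of W to a single level
  obtain ⟨w, hwW, hwne⟩ := Submodule.ne_bot_iff W |>.mp hWbot
  have hw : (∑ i ∈ (Bb.repr w).support, (Bb.repr w) i • Bb i) = w := by
    conv_rhs => rw [← Bb.linearCombination_repr w]
    rw [Finsupp.linearCombination_apply, Finsupp.sum]
  let lamK : FockIdx p → ℂ :=
    Sum.elim (fun q => 2*(q.1.2:ℂ) - p) (fun q => 2*(q.1.2:ℂ) - p)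
  let lamL : FockIdx p → ℂ :=
    Sum.elim (fun q => 2*(q.1.1:ℂ) + p) (fun q => 2*(q.1.1:ℂ) + p)
  have heigK : ∀ i, K (Bb i) = lamK i • Bb i := by
    rintro (⟨⟨m,n⟩,h⟩ | ⟨⟨m,n⟩,h⟩)
    · rw [hBX m n h]
      simpa [lamK] using hKX m n
    · obtain ⟨h1, h2, h3⟩ := h
      obtain ⟨m', rfl⟩ : ∃ m', m = m'+1 := ⟨m-1, by omega⟩
      obtain ⟨n', rfl⟩ : ∃ n', n = n'+1 := ⟨n-1, by omega⟩
      rw [hBY _ _ ⟨h1, h2, h3⟩]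
      simp only [lamK, Sum.elim_inr]
      push_cast
      exact hKY m' n'
  have heigL : ∀ i, L (Bb i) = lamL i • Bb i := by
    rintro (⟨⟨m,n⟩,h⟩ | ⟨⟨m,n⟩,h⟩)
    · rw [hBX m n h]
      simpa [lamL] using hLX m n
    · obtain ⟨h1, h2, h3⟩ := h
      obtain ⟨m', rfl⟩ : ∃ m', m = m'+1 := ⟨m-1, by omega⟩
      obtain ⟨n', rfl⟩ : ∃ n', n = n'+1 := ⟨n-1, by omega⟩
      rw [hBY _ _ ⟨h1, h2, h3⟩]
      simp only [lamL, Sum.elim_inr]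
      push_cast
      exact hLY m' n'
  have hrne : Bb.repr w ≠ 0 := fun h => hwne (by
    have := Bb.repr.map_eq_zero_iff.mp h
    exact this)
  obtain ⟨i₀, hi₀⟩ := Finsupp.support_nonempty_iff.mpr hrne
  have hstep1 := proj_lemma' W K hWK Bb lamK heigK (Bb.repr w).support
    (fun i => Bb.repr w i) (by rw [hw]; exact hwW) (lamK i₀)
  set s₁ := (Bb.repr w).support.filter (fun i => lamK i = lamK i₀) with hs₁
  have hstep2 := proj_lemma' W L hWL Bb lamL heigL s₁
    (fun i => Bb.repr w i) hstep1 (lamL i₀)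
  set s₂ := s₁.filter (fun i => lamL i = lamL i₀) with hs₂
  have hi₀s₂ : i₀ ∈ s₂ := by
    rw [hs₂, Finset.mem_filter, hs₁, Finset.mem_filter]
    exact ⟨⟨hi₀, rfl⟩, rfl⟩
  have coord : ∀ (t : Finset (FockIdx p)) (c : FockIdx p → ℂ) (j), j ∈ t →
      Bb.repr (∑ i ∈ t, c i • Bb i) j = c j := by
    intro t c j hj
    rw [map_sum, Finsupp.finset_sum_apply]
    simp only [map_smul, Module.Basis.repr_self, Finsupp.smul_apply, Finsupp.single_apply,
      smul_eq_mul, mul_ite, mul_one, mul_zero]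
    rw [Finset.sum_ite_eq' t j c]
    simp [hj]
  have hw2ne : (∑ i ∈ s₂, (Bb.repr w) i • Bb i) ≠ 0 := by
    intro h
    have h0 := coord s₂ (fun i => Bb.repr w i) i₀ hi₀s₂
    rw [h] at h0
    simp only [map_zero, Finsupp.coe_zero, Pi.zero_apply] at h0
    exact (Finsupp.mem_support_iff.mp hi₀) h0.symm
  -- level of i₀
  set m₀ : ℕ := Sum.elim (fun q => q.1.1) (fun q => q.1.1) i₀ with hm₀
  set n₀ : ℕ := Sum.elim (fun q => q.1.2) (fun q => q.1.2) i₀ with hn₀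
  have hlamK₀ : lamK i₀ = 2*(n₀:ℂ) - p := by
    rcases i₀ with q | q <;> simp [lamK, hn₀]
  have hlamL₀ : lamL i₀ = 2*(m₀:ℂ) + p := by
    rcases i₀ with q | q <;> simp [lamL, hm₀]
  have hn₀p : n₀ ≤ p := by
    rcases i₀ with ⟨⟨m,n⟩,h⟩ | ⟨⟨m,n⟩,h⟩
    · simpa [hn₀] using h
    · simp only [hn₀, Sum.elim_inr]
      omega
  have hlev : ∀ i ∈ s₂, Bb i = X m₀ n₀ ∨ Bb i = Y m₀ n₀ := by
    intro i hi
    rw [hs₂, Finset.mem_filter, hs₁, Finset.mem_filter] at hi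
    obtain ⟨⟨-, hKi⟩, hLi⟩ := hi
    rw [hlamK₀] at hKi
    rw [hlamL₀] at hLi
    rcases i with ⟨⟨m,n⟩,h⟩ | ⟨⟨m,n⟩,h⟩
    · simp only [lamK, lamL, Sum.elim_inl] at hKi hLi
      have hn : n = n₀ := by
        have : (n:ℂ) = n₀ := by linear_combination hKi / 2
        exact_mod_cast this
      have hm : m = m₀ := by
        have : (m:ℂ) = m₀ := by linear_combination hLi / 2
        exact_mod_cast this
      left
      rw [hBX m n h, hn, hm]
    · simp only [lamK, lamL, Sum.elim_inr] at hKi hLi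
      have hn : n = n₀ := by
        have : (n:ℂ) = n₀ := by linear_combination hKi / 2
        exact_mod_cast this
      have hm : m = m₀ := by
        have : (m:ℂ) = m₀ := by linear_combination hLi / 2
        exact_mod_cast this
      right
      rw [hBY m n h, hn, hm]
  have sumform : ∀ (t : Finset (FockIdx p)) (c : FockIdx p → ℂ) (u v : V),
      (∀ i ∈ t, Bb i = u ∨ Bb i = v) →
      ∃ a b : ℂ, ∑ i ∈ t, c i • Bb i = a • u + b • v := by
    intro t c u v
    induction t using Finset.induction_on with
    | empty => intro _; exact ⟨0, 0, by simp⟩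
    | @insert j t hni ih =>
      intro hyp
      obtain ⟨a, b, hab⟩ := ih (fun i hi => hyp i (Finset.mem_insert_of_mem hi))
      rcases hyp j (Finset.mem_insert_self j t) with h | h
      · refine ⟨a + c j, b, ?_⟩
        rw [Finset.sum_insert hni, hab, h]
        module
      · refine ⟨a, b + c j, ?_⟩
        rw [Finset.sum_insert hni, hab, h]
        module
  obtain ⟨a, b, hab⟩ := sumform s₂ (fun i => Bb.repr w i) (X m₀ n₀) (Y m₀ n₀) hlev
  rw [hab] at hstep2 hw2ne
  have hvacW : vac ∈ W := key n₀ m₀ a b hn₀p hstep2 hw2ne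
  -- ## stage 3: W contains every basis vector
  have hXW0 : ∀ m, X m 0 ∈ W := by
    intro m
    induction m with
    | zero => rw [hX00]; exact hvacW
    | succ m ih => rw [hXb m]; exact hWbp _ ih
  have hXW : ∀ m n, X m n ∈ W := by
    intro m n
    induction n with
    | zero => exact hXW0 m
    | succ n ih => rw [hXsucc m n]; exact hWfp _ ih
  have hYW1 : ∀ m, Y (m+1) 1 ∈ W := by
    intro m
    induction m with
    | zero =>
      rw [hY11, hRapp vac]
      exact Submodule.smul_mem _ _ (add_mem (hWbp _ (hWfp _ hvacW)) (hWfp _ (hWbp _ hvacW)))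
    | succ m ih => rw [hYb m]; exact hWbp _ ih
  have hYW : ∀ m n, Y m n ∈ W := by
    intro m n
    rcases m with _ | m
    · rw [hY0']; exact zero_mem W
    rcases n with _ | n
    · rw [hY0]; exact zero_mem W
    induction n with
    | zero => exact hYW1 m
    | succ n ih => rw [← fpY (m+1) n]; exact hWfp _ ih
  rw [eq_top_iff]
  refine le_trans hspan (Submodule.span_le.mpr ?_)
  rintro x ⟨i, rfl⟩
  rcases i with ⟨⟨m,n⟩,h⟩ | ⟨⟨m,n⟩,h⟩
  · exact hXW m n
  · exact hYW m n
end
end
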